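/- arXiv:2312.03933 — 8 statements merged into one kernel-verified Lean document; each statement's English description precedes it below -/
import Mathlib

section
/- Suppose K is a field with more than two elements, S is a spanning subset of X, and the graph G(S) is connected. Then two nonzero elements α, β of the dual space X* belong to the same orbit of the dual transvection group Tr(S)* if and only if β − α lies in the image of the linear map ω : X → X*. -/
/-- The set of symplectic transvections `T_{s,k} : x ↦ x + k·ω(x,s)·s`
for `s ∈ S` and `k ≠ 0`, realized as permutations of `X`. -/
def transvectionSet {K X : Type*} [Field K] [AddCommGroup X] [Module K X]
    (ω : X →ₗ[K] X →ₗ[K] K) (S : Set X) : Set (Equiv.Perm X) :=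
  {f | ∃ s ∈ S, ∃ k : K, k ≠ 0 ∧ ∀ x, f x = x + (k * ω x s) • s}

/-- The transvection group `Tr(S)`, the subgroup of permutations of `X`
generated by the symplectic transvections with `s ∈ S`. -/
def transvectionGroup {K X : Type*} [Field K] [AddCommGroup X] [Module K X]
    (ω : X →ₗ[K] X →ₗ[K] K) (S : Set X) : Subgroup (Equiv.Perm X) :=
  Subgroup.closure (transvectionSet ω S)

/-- The graph `G(S)` with vertex set `S` and an edge between `u` and `v`
iff `ω(u,v) ≠ 0`. -/
def transGraph {K X : Type*} [Field K] [AddCommGroup X] [Module K X]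
    (ω : X →ₗ[K] X →ₗ[K] K) (S : Set X) : SimpleGraph S :=
  SimpleGraph.fromRel (fun u v => ω u.1 v.1 ≠ 0)

/-- Two dual vectors are in the same orbit of the dual transvection group
`Tr(S)*`, i.e. `β = α ∘ g` for some `g ∈ Tr(S)`. -/
def sameDualOrbit {K X : Type*} [Field K] [AddCommGroup X] [Module K X]
    (ω : X →ₗ[K] X →ₗ[K] K) (S : Set X) (α β : Module.Dual K X) : Prop :=
  ∃ g ∈ transvectionGroup ω S, ∀ x, β x = α (g x)

/-! The dual of `T_{s,k}` sends `α` to `α - k α(s) ω(s)`. Hence `Tr(S)*` moves `α` only inside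
`α + im ω`, and conversely `α` can be sent to `α + c ω(s)` in one step whenever `α(s) ≠ 0`.
If `α(s) = 0`, walk in `G(S)` towards `s` from a vertex `u` where both `α` and
`β = α + c ω(s)` are nonzero: adding to both the same multiple of `ω(u)`, chosen (using
`|K| > 2`) to make both nonzero at the next vertex, moves the problem one step closer to `s`,
and the detour is undone afterwards because `β(u) ≠ 0`. One preliminary move produces such a
common vertex. Finally `β - α = ω(Σ cᵢ sᵢ)` is reached one summand at a time; an intermediate
functional can vanish only when two consecutive shifts coincide, and then they merge into one. -/

theorem Set.subsingleton_setOf_add_mul_eq_zero {K : Type*} [Field K] {a b : K}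
    (h : a ≠ 0 ∨ b ≠ 0) : {l : K | a + l * b = 0}.Subsingleton := by
  intro l (hl : a + l * b = 0) l' (hl' : a + l' * b = 0)
  have hb : b ≠ 0 := by rintro rfl; simp_all
  exact mul_right_cancel₀ hb (by linear_combination hl - hl')

theorem exists_add_mul_ne_zero_and_add_mul_ne_zero {K : Type*} [Field K]
    (hK : ∃ k : K, k ≠ 0 ∧ k ≠ 1) {a₁ b₁ a₂ b₂ : K} (h₁ : a₁ ≠ 0 ∨ b₁ ≠ 0)
    (h₂ : a₂ ≠ 0 ∨ b₂ ≠ 0) : ∃ l, a₁ + l * b₁ ≠ 0 ∧ a₂ + l * b₂ ≠ 0 := by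
  obtain ⟨k, hk0, hk1⟩ := hK
  have H₁ := Set.subsingleton_setOf_add_mul_eq_zero h₁
  have H₂ := Set.subsingleton_setOf_add_mul_eq_zero h₂
  by_contra! H
  have hcover : ∀ l, a₁ + l * b₁ = 0 ∨ a₂ + l * b₂ = 0 := fun l => by tauto
  -- two of the three distinct values `0, 1, k` would be roots of the same affine function
  rcases hcover 0 with h0 | h0 <;> rcases hcover 1 with h1 | h1 <;>
    rcases hcover k with h2 | h2
  all_goals first
    | exact zero_ne_one (H₁ h0 h1) | exact zero_ne_one (H₂ h0 h1)
    | exact hk0 (H₁ h2 h0) | exact hk0 (H₂ h2 h0)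
    | exact hk1 (H₁ h2 h1) | exact hk1 (H₂ h2 h1)

section

variable {K X : Type*} [Field K] [AddCommGroup X] [Module K X] {ω : X →ₗ[K] X →ₗ[K] K}
  {S : Set X}

namespace sameDualOrbit

theorem refl (α : Module.Dual K X) : sameDualOrbit ω S α α :=
  ⟨1, one_mem _, fun _ => rfl⟩

theorem symm {α β : Module.Dual K X} (h : sameDualOrbit ω S α β) : sameDualOrbit ω S β α := by
  obtain ⟨g, hg, h⟩ := h
  exact ⟨g⁻¹, inv_mem hg, fun x => by simp [h]⟩

theorem trans {α β γ : Module.Dual K X} (h₁ : sameDualOrbit ω S α β)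
    (h₂ : sameDualOrbit ω S β γ) : sameDualOrbit ω S α γ := by
  obtain ⟨g, hg, h₁⟩ := h₁
  obtain ⟨f, hf, h₂⟩ := h₂
  exact ⟨g * f, mul_mem hg hf, fun x => by rw [h₂, h₁]; rfl⟩

instance : Trans (sameDualOrbit ω S) (sameDualOrbit ω S) (sameDualOrbit ω S) := ⟨trans⟩

end sameDualOrbit

theorem exists_mem_transvectionSet (hω : ω.IsAlt) {s : X} (hs : s ∈ S) {k : K} (hk : k ≠ 0) :
    ∃ f ∈ transvectionSet ω S, ∀ x, f x = x + (k * ω x s) • s :=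
  ⟨(LinearEquiv.transvection (f := k • ω.flip s) (v := s)
    (by simp [hω.self_eq_zero])).toEquiv, ⟨s, hs, k, hk, fun _ => rfl⟩, fun _ => rfl⟩

theorem inv_apply_of_transvection (hω : ω.IsAlt) {f : Equiv.Perm X} {s : X} {k : K}
    (hf : ∀ x, f x = x + (k * ω x s) • s) (x : X) : f⁻¹ x = x + (-k * ω x s) • s := by
  rw [Equiv.Perm.inv_eq_iff_eq, hf]
  simp [hω.self_eq_zero]

theorem apply_transvection (hω : ω.IsAlt) {f : Equiv.Perm X} {s : X} {k : K}
    (hf : ∀ x, f x = x + (k * ω x s) • s) (α : Module.Dual K X) (x : X) :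
    α (f x) = (α + (-(k * α s)) • ω s) x := by
  rw [hf, ← hω.neg]
  simp
  ring

theorem exists_apply_eq_add_of_mem_transvectionGroup (hω : ω.IsAlt) {g : Equiv.Perm X}
    (hg : g ∈ transvectionGroup ω S) (α : Module.Dual K X) :
    ∃ v, ∀ x, α (g x) = α x + ω v x := by
  have of_formula : ∀ {f : Equiv.Perm X} {s : X} {k : K}, (∀ x, f x = x + (k * ω x s) • s) →
      ∀ α : Module.Dual K X, ∃ v, ∀ x, α (f x) = α x + ω v x :=
    fun {f s k} hf α => ⟨(-(k * α s)) • s, fun x => by simp [apply_transvection hω hf]⟩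
  induction hg using Subgroup.closure_induction'' generalizing α with
  | mem f hf =>
    obtain ⟨s, -, k, -, hf⟩ := hf
    exact of_formula hf α
  | inv_mem f hf =>
    obtain ⟨s, -, k, -, hf⟩ := hf
    exact of_formula (inv_apply_of_transvection hω hf) α
  | one => exact ⟨0, by simp⟩
  | mul a b _ _ ha hb =>
    obtain ⟨v₁, h₁⟩ := ha α
    obtain ⟨v₂, h₂⟩ := hb α
    obtain ⟨v₃, h₃⟩ := hb (ω v₁)
    exact ⟨v₂ + v₁ + v₃, fun x => by simp [h₁, h₂, h₃]; ring⟩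

theorem sameDualOrbit.sub_mem_range (hω : ω.IsAlt) {α β : Module.Dual K X}
    (h : sameDualOrbit ω S α β) : β - α ∈ LinearMap.range ω := by
  obtain ⟨g, hg, hgα⟩ := h
  obtain ⟨v, hv⟩ := exists_apply_eq_add_of_mem_transvectionGroup hω hg α
  exact ⟨v, LinearMap.ext fun x => by simp [hgα, hv]⟩

theorem sameDualOrbit_add_smul (hω : ω.IsAlt) {s : X} (hs : s ∈ S) {α : Module.Dual K X}
    (hα : α s ≠ 0) (d : K) : sameDualOrbit ω S α (α + d • ω s) := by
  rcases eq_or_ne d 0 with rfl | hd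
  · simpa using sameDualOrbit.refl α
  obtain ⟨f, hf, hfx⟩ := exists_mem_transvectionSet hω hs (k := -(d / α s)) (by simp [hd, hα])
  refine ⟨f, Subgroup.subset_closure hf, fun x => ?_⟩
  rw [apply_transvection hω hfx]
  field_simp

theorem transGraph_adj_apply_ne_zero (hω : ω.IsAlt) {u v : S} (h : (transGraph ω S).Adj u v) :
    ω u v ≠ 0 := by
  rw [transGraph, SimpleGraph.fromRel_adj] at h
  exact h.2.elim id fun h' => by rwa [Ne, hω.eq_iff]

theorem exists_mem_apply_ne_zero (hspan : Submodule.span K S = ⊤) {α : Module.Dual K X}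
    (hα : α ≠ 0) : ∃ u ∈ S, α u ≠ 0 := by
  by_contra! h
  exact hα (LinearMap.ext_on hspan fun u hu => by simpa using h u hu)

theorem sameDualOrbit_of_walk (hω : ω.IsAlt) (hK : ∃ k : K, k ≠ 0 ∧ k ≠ 1) {u s : S}
    (w : (transGraph ω S).Walk u s) {α β : Module.Dual K X} {c : K} (hβ : β = α + c • ω s)
    (hαu : α u ≠ 0) (hβu : β u ≠ 0) : sameDualOrbit ω S α β := by
  induction w generalizing α β with
  | nil => exact hβ ▸ sameDualOrbit_add_smul hω (Subtype.prop _) hαu c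
  | @cons u q s hadj w ih =>
    have huq := transGraph_adj_apply_ne_zero hω hadj
    obtain ⟨ν, hαq, hβq⟩ :=
      exists_add_mul_ne_zero_and_add_mul_ne_zero hK (a₁ := α q) (a₂ := β q) (Or.inr huq)
        (Or.inr huq)
    calc sameDualOrbit ω S α (α + ν • ω u) := sameDualOrbit_add_smul hω u.2 hαu ν
      sameDualOrbit ω S _ (β + ν • ω u) :=
        ih (by rw [hβ]; abel) (by simpa using hαq) (by simpa using hβq)
      sameDualOrbit ω S _ β := (sameDualOrbit_add_smul hω u.2 hβu ν).symm

theorem sameDualOrbit_add_smul_of_ne_zero (hω : ω.IsAlt) (hK : ∃ k : K, k ≠ 0 ∧ k ≠ 1)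
    (hspan : Submodule.span K S = ⊤) (hconn : (transGraph ω S).Connected) {s : X} (hs : s ∈ S)
    {α : Module.Dual K X} (hα : α ≠ 0) {c : K} (hβ : α + c • ω s ≠ 0) :
    sameDualOrbit ω S α (α + c • ω s) := by
  set β := α + c • ω s with hβdef
  obtain ⟨u, hu, hαu⟩ := exists_mem_apply_ne_zero hspan hα
  by_cases hβu : β u ≠ 0
  · obtain ⟨w⟩ := hconn.preconnected ⟨u, hu⟩ ⟨s, hs⟩
    exact sameDualOrbit_of_walk hω hK w rfl hαu hβu
  -- `β u = 0 ≠ α u` forces `ω u s ≠ 0`, so moving `α` along `ω u` makes it nonzero at `s`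
  have hus : ω u s ≠ 0 := by
    rw [Ne, hω.eq_iff]
    rintro h
    simp [β, h, hαu] at hβu
  obtain ⟨v, hv, hβv⟩ := exists_mem_apply_ne_zero hspan hβ
  obtain ⟨l, hls, hlv⟩ := exists_add_mul_ne_zero_and_add_mul_ne_zero hK (a₁ := α s)
    (a₂ := β v) (b₂ := ω u v) (Or.inr hus) (Or.inl hβv)
  obtain ⟨w⟩ := hconn.preconnected ⟨v, hv⟩ ⟨u, hu⟩
  calc sameDualOrbit ω S α (α + l • ω u) := sameDualOrbit_add_smul hω hu hαu l
    sameDualOrbit ω S _ (α + l • ω u + c • ω s) :=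
      sameDualOrbit_add_smul hω hs (by simpa using hls) c
    _ = β + l • ω u := by rw [hβdef]; abel
    sameDualOrbit ω S _ β :=
      sameDualOrbit_of_walk hω hK w (c := -l) (by module) (by simpa using hlv) hβv

def IsOrbitShift (ω : X →ₗ[K] X →ₗ[K] K) (S : Set X) (v : X) : Prop :=
  ∀ α : Module.Dual K X, α ≠ 0 → α + ω v ≠ 0 → sameDualOrbit ω S α (α + ω v)

theorem IsOrbitShift.add {x y : X} (hx : IsOrbitShift ω S x) (hy : IsOrbitShift ω S y)
    (hxx : IsOrbitShift ω S (x + x)) : IsOrbitShift ω S (x + y) := by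
  intro α hα hxy
  by_cases hαx : α + ω x = 0
  · by_cases hαy : α + ω y = 0
    · have hyx : ω y = ω x := by
        rw [eq_neg_of_add_eq_zero_right hαx, eq_neg_of_add_eq_zero_right hαy]
      rw [map_add, hyx, ← map_add] at hxy ⊢
      exact hxx α hα hxy
    · rw [map_add, add_comm (ω x), ← add_assoc] at hxy ⊢
      exact (hy α hα hαy).trans (hx _ hαy hxy)
  · rw [map_add, ← add_assoc] at hxy ⊢
    exact (hx α hα hαx).trans (hy _ hαx hxy)

theorem isOrbitShift_of_mem_span (hω : ω.IsAlt) (hK : ∃ k : K, k ≠ 0 ∧ k ≠ 1)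
    (hspan : Submodule.span K S = ⊤) (hconn : (transGraph ω S).Connected) {v : X}
    (hv : v ∈ Submodule.span K S) : IsOrbitShift ω S v := by
  have generator {c : K} {s : X} (hs : s ∈ S) : IsOrbitShift ω S (c • s) := fun α hα h => by
    rw [map_smul] at h ⊢
    exact sameDualOrbit_add_smul_of_ne_zero hω hK hspan hconn hs hα h
  replace hv : v ∈ (Submodule.span K S).toAddSubmonoid := hv
  rw [Submodule.span_eq_closure] at hv
  induction hv using AddSubmonoid.closure_induction_left with
  | zero => exact fun α _ _ => by simpa using sameDualOrbit.refl α
  | add_left x hx y _ ih =>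
    obtain ⟨c, -, s, hs, rfl⟩ := hx
    exact (generator hs).add ih (by rw [← add_smul]; exact generator hs)

end

theorem stmt0_general {K X : Type*} [Field K] [AddCommGroup X] [Module K X]
    (ω : X →ₗ[K] X →ₗ[K] K) (halt : ∀ x, ω x x = 0)
    (hK : ∃ k : K, k ≠ 0 ∧ k ≠ 1)
    (S : Set X) (hspan : Submodule.span K S = ⊤)
    (hconn : (transGraph ω S).Connected)
    (α β : Module.Dual K X) (hα : α ≠ 0) (hβ : β ≠ 0) :
    sameDualOrbit ω S α β ↔ β - α ∈ LinearMap.range ω := by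
  refine ⟨sameDualOrbit.sub_mem_range halt, fun ⟨v, hv⟩ => ?_⟩
  have hβα : α + ω v = β := by rw [hv, add_sub_cancel]
  have hshift := isOrbitShift_of_mem_span halt hK hspan hconn (v := v) (by simp [hspan]) α hα
  exact hβα ▸ hshift (hβα ▸ hβ)

/-- if `K` has more than two elements, `S` spans `X` and `G(S)` is
connected, then nonzero `α, β ∈ X*` lie in the same `Tr(S)*`-orbit iff
`β - α ∈ im ω`. -/
theorem stmt0 {K X : Type*} [Field K] [AddCommGroup X] [Module K X]
    [FiniteDimensional K X]
    (ω : X →ₗ[K] X →ₗ[K] K) (halt : ∀ x, ω x x = 0)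
    (hK : ∃ k : K, k ≠ 0 ∧ k ≠ 1)
    (S : Set X) (hspan : Submodule.span K S = ⊤)
    (hconn : (transGraph ω S).Connected)
    (α β : Module.Dual K X) (hα : α ≠ 0) (hβ : β ≠ 0) :
    sameDualOrbit ω S α β ↔ β - α ∈ LinearMap.range ω :=
  stmt0_general ω halt hK S hspan hconn α β hα hβ
end

section
/- Suppose K = F₂, S is a basis of X not of orthogonal type, and G(S) is connected, so that G(S) is the line graph of a connected multigraph G = (V,E) and S is identified with E. Then two elements β, γ ∈ X* belong to the same orbit of the dual transvection group Tr(S)* if and only if γ − β ∈ im ω and either β ∉ im δ, or β ∈ im δ and d(y) = d(z) for some y, z ∈ ⟨V⟩ with δ(y) = β and δ(z) = γ. -/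
/-- One t-equivalence step. -/
def tStep {X : Type*} [AddCommGroup X] [Module (ZMod 2) X]
    (ω : X →ₗ[ZMod 2] X →ₗ[ZMod 2] ZMod 2) (S S' : Set X) : Prop :=
  ∃ s ∈ S, ∃ t ∈ S, s ≠ t ∧ ω s t = 1 ∧ S' = insert (s + t) (S \ {t})

/-- t-equivalence. -/
def tEquiv {X : Type*} [AddCommGroup X] [Module (ZMod 2) X]
    (ω : X →ₗ[ZMod 2] X →ₗ[ZMod 2] ZMod 2) : Set X → Set X → Prop :=
  Relation.ReflTransGen (tStep ω)

/-- The graph `E₆`. -/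
def e6Graph : SimpleGraph (Fin 6) :=
  SimpleGraph.fromRel
    (fun i j => (i, j) ∈ [((0 : Fin 6), (1 : Fin 6)), (1, 2), (2, 3), (3, 4), (2, 5)])

/-- Orthogonal type. -/
def IsOrthogonalType {X : Type*} [AddCommGroup X] [Module (ZMod 2) X]
    (ω : X →ₗ[ZMod 2] X →ₗ[ZMod 2] ZMod 2) (S : Set X) : Prop :=
  ∃ S' : Set X, tEquiv ω S S' ∧ (transGraph ω S').IsTree ∧
    ∃ f : Fin 6 → S', Function.Injective f ∧
      ∀ i j, (transGraph ω S').Adj (f i) (f j) ↔ e6Graph.Adj i j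

/-- the co-boundary map `δ : ⟨V⟩ → X*`, `δ(y)(x) = ω_{⟨V⟩}(y, ∂ x)`,
where `ω_{⟨V⟩}` is the standard inner product making `V` orthonormal. -/
def coboundary {X V : Type*} [AddCommGroup X] [Module (ZMod 2) X] [Fintype V]
    (bd : X →ₗ[ZMod 2] (V → ZMod 2)) (y : V → ZMod 2) : Module.Dual (ZMod 2) X :=
  (∑ v : V, y v • LinearMap.proj v) ∘ₗ bd

/-- the number of one coordinates of `y`. -/
noncomputable def dOne {V : Type*} [Fintype V] (y : V → ZMod 2) : ℕ :=
  (Finset.univ.filter fun v => y v = 1).card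

/-- the number of zero coordinates of `y`. -/
noncomputable def dZero {V : Type*} [Fintype V] (y : V → ZMod 2) : ℕ :=
  (Finset.univ.filter fun v => y v = 0).card

/-- `d(y) = min(d₀(y), d₁(y))`. -/
noncomputable def dFun {V : Type*} [Fintype V] (y : V → ZMod 2) : ℕ :=
  min (dZero y) (dOne y)

/-!
Over `𝔽₂` the `Tr(S)*`-orbits are the classes of the moves `α ↦ α + α(e) ω(e)`, `e ∈ S`, and
because `G(S)` is the line graph of the multigraph, `ω(x) = δ(∂x)`. For a functional
`δ(y) + ρ`, the move along an edge `e = uv` with `ρ(e) = 0` swaps the coordinates `y(u)`, `y(v)`,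
while the move along an edge with `ρ(e) = 1` adds `u + v` to `y` when `y(u) = y(v) = 0`.
Thus for `β = δ(y)` the orbit consists of the `δ(y ∘ σ)`, which only remembers the weight of `y`
up to `y ↦ y + 1` (as `δ(1) = 0`). If `β ∉ im δ`, choose `y` with `ρ = β - δ(y)` vanishing on a
spanning tree; then `ρ ≠ 0`, the tree swaps generate all permutations, and an edge with
`ρ(e) = 1` changes the weight by two, so only the parity of the weight survives, and adding
`ω(x) = δ(∂x)` does not change it.
-/

open Relation Matrix

lemma ZMod.eq_zero_or_eq_one (c : ZMod 2) : c = 0 ∨ c = 1 := by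
  revert c; decide

lemma ZMod.eq_of_eq_one_iff {s t : ZMod 2} (h : s = 1 ↔ t = 1) : s = t := by
  rcases s.eq_zero_or_eq_one with rfl | rfl <;> rcases t.eq_zero_or_eq_one with rfl | rfl <;>
    simp_all

section Transvection

variable {X : Type*} [AddCommGroup X] [Module (ZMod 2) X]
  {ω : X →ₗ[ZMod 2] X →ₗ[ZMod 2] ZMod 2} {S : Set X}

lemma apply_comm_of_alternating (halt : ∀ x, ω x x = 0) (x y : X) : ω x y = ω y x := by
  have h : LinearMap.IsAlt ω := halt
  rw [← h.neg x y, ZMod.neg_eq_self_mod_two]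

def transvection (halt : ∀ x, ω x x = 0) (s : X) : Equiv.Perm X :=
  Function.Involutive.toPerm (fun x => x + ω x s • s) fun x => by
    simp [halt, add_assoc, ← add_smul, CharTwo.add_self_eq_zero]

lemma transvection_apply (halt : ∀ x, ω x x = 0) (s x : X) :
    transvection halt s x = x + ω x s • s := rfl

lemma transvection_inv (halt : ∀ x, ω x x = 0) (s : X) :
    (transvection halt s)⁻¹ = transvection halt s := rfl

lemma mem_transvectionSet_iff (halt : ∀ x, ω x x = 0) {f : Equiv.Perm X} :
    f ∈ transvectionSet ω S ↔ ∃ s ∈ S, f = transvection halt s := by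
  constructor
  · rintro ⟨s, hs, k, hk, hf⟩
    obtain rfl : k = 1 := k.eq_zero_or_eq_one.resolve_left hk
    exact ⟨s, hs, Equiv.ext fun x => by simp [hf, transvection_apply]⟩
  · rintro ⟨s, hs, rfl⟩
    exact ⟨s, hs, 1, one_ne_zero, fun x => by simp [transvection_apply]⟩

variable (ω S) in
def DualStep (α α' : Module.Dual (ZMod 2) X) : Prop :=
  ∃ e ∈ S, α' = α + α e • ω e

lemma dualStep_symm (halt : ∀ x, ω x x = 0) {α α' : Module.Dual (ZMod 2) X}
    (h : DualStep ω S α α') : DualStep ω S α' α := by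
  obtain ⟨e, he, rfl⟩ := h
  refine ⟨e, he, ?_⟩
  simp [halt, add_assoc, ← add_smul, CharTwo.add_self_eq_zero]

lemma equivalence_reflTransGen_dualStep (halt : ∀ x, ω x x = 0) :
    Equivalence (ReflTransGen (DualStep ω S)) :=
  haveI : Std.Symm (DualStep ω S) := ⟨fun _ _ => dualStep_symm halt⟩
  ⟨fun _ => .refl, Std.Symm.symm _ _, .trans⟩

lemma add_apply_smul_apply_eq_apply_transvection (halt : ∀ x, ω x x = 0)
    (β : Module.Dual (ZMod 2) X) (s x : X) :
    (β + β s • ω s) x = β (transvection halt s x) := by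
  simp [transvection_apply, apply_comm_of_alternating halt s x, mul_comm]

lemma exists_reflTransGen_of_mem_transvectionGroup (halt : ∀ x, ω x x = 0)
    {g : Equiv.Perm X} (hg : g ∈ transvectionGroup ω S) (β : Module.Dual (ZMod 2) X) :
    ∃ γ, (∀ x, γ x = β (g x)) ∧ ReflTransGen (DualStep ω S) β γ := by
  have step : ∀ f ∈ transvectionSet ω S, ∀ β : Module.Dual (ZMod 2) X, ∃ γ,
      (∀ x, γ x = β (f x)) ∧ ReflTransGen (DualStep ω S) β γ := by
    intro f hf β
    obtain ⟨s, hs, rfl⟩ := (mem_transvectionSet_iff halt).1 hf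
    exact ⟨_, add_apply_smul_apply_eq_apply_transvection halt β s, .single ⟨s, hs, rfl⟩⟩
  induction hg using Subgroup.closure_induction'' generalizing β with
  | mem f hf => exact step f hf β
  | inv_mem f hf =>
    obtain ⟨s, -, rfl⟩ := (mem_transvectionSet_iff halt).1 hf
    exact transvection_inv halt s ▸ step _ hf β
  | one => exact ⟨β, fun _ => rfl, .refl⟩
  | mul f f' _ _ hf hf' =>
    obtain ⟨γ₁, hγ₁, h₁⟩ := hf β
    obtain ⟨γ₂, hγ₂, h₂⟩ := hf' γ₁
    exact ⟨γ₂, fun x => (hγ₂ x).trans (hγ₁ _), h₁.trans h₂⟩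

theorem exists_mem_transvectionGroup_iff_reflTransGen (halt : ∀ x, ω x x = 0)
    (β γ : Module.Dual (ZMod 2) X) :
    (∃ g ∈ transvectionGroup ω S, ∀ x, γ x = β (g x)) ↔ ReflTransGen (DualStep ω S) β γ := by
  constructor
  · rintro ⟨g, hg, hγ⟩
    obtain ⟨γ', hγ', hβγ'⟩ := exists_reflTransGen_of_mem_transvectionGroup halt hg β
    rwa [show γ = γ' from LinearMap.ext fun x => (hγ x).trans (hγ' x).symm]
  · intro h
    induction h with
    | refl => exact ⟨1, one_mem _, fun _ => rfl⟩
    | tail _ hstep ih =>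
      obtain ⟨g, hg, hγ⟩ := ih
      obtain ⟨e, he, rfl⟩ := hstep
      refine ⟨g * transvection halt e, mul_mem hg ?_, fun x => ?_⟩
      · exact Subgroup.subset_closure ((mem_transvectionSet_iff halt).2 ⟨e, he, rfl⟩)
      · rw [add_apply_smul_apply_eq_apply_transvection, hγ, Equiv.Perm.mul_apply]

lemma sub_mem_range_of_reflTransGen_dualStep {β γ : Module.Dual (ZMod 2) X}
    (h : ReflTransGen (DualStep ω S) β γ) : γ - β ∈ LinearMap.range ω := by
  induction h with
  | refl => simp
  | @tail α _ _ hstep ih =>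
    obtain ⟨e, -, rfl⟩ := hstep
    rw [add_sub_right_comm]
    exact add_mem ih (Submodule.smul_mem _ _ (LinearMap.mem_range_self ω e))

end Transvection

section Weight

variable {V : Type*} [Fintype V]

lemma dOne_comp_perm (y : V → ZMod 2) (σ : Equiv.Perm V) : dOne (y ∘ σ) = dOne y :=
  Finset.card_equiv σ (by simp)

lemma dZero_add_dOne (y : V → ZMod 2) : dZero y + dOne y = Fintype.card V := by
  have hzero : ∀ v, y v = 0 ↔ ¬ y v = 1 := fun v => by
    rcases (y v).eq_zero_or_eq_one with h | h <;> simp [h]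
  simp only [dZero, dOne, hzero]
  rw [add_comm, Finset.card_filter_add_card_filter_not, Finset.card_univ]

lemma dOne_add_one (y : V → ZMod 2) : dOne (y + 1) = dZero y := by
  have : ∀ v, (y + 1) v = 1 ↔ y v = 0 := fun v => by
    rcases (y v).eq_zero_or_eq_one with h | h <;> simp [h]
  simp only [dOne, dZero, this]

lemma natCast_dOne (y : V → ZMod 2) : (dOne y : ZMod 2) = ∑ v, y v := by
  have : ∀ v, y v = if y v = 1 then 1 else 0 := fun v => by
    rcases (y v).eq_zero_or_eq_one with h | h <;> simp [h]
  rw [Finset.sum_congr rfl fun v _ => this v, Finset.sum_boole, dOne]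

lemma dOne_add_single [DecidableEq V] {y : V → ZMod 2} {a : V} (ha : y a = 0) :
    dOne (y + Pi.single a 1) = dOne y + 1 := by
  have : Finset.univ.filter (fun v => (y + Pi.single a 1 : V → ZMod 2) v = 1) =
      insert a (Finset.univ.filter fun v => y v = 1) := by
    ext v
    rcases eq_or_ne v a with rfl | hv
    · simp [ha]
    · simp [hv]
  rw [dOne, this, Finset.card_insert_of_notMem (by simp [ha]), dOne]

lemma dOne_indicator [DecidableEq V] (s : Finset V) :
    dOne (fun v => if v ∈ s then (1 : ZMod 2) else 0) = s.card := by
  rw [dOne]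
  congr 1
  ext v
  by_cases hv : v ∈ s <;> simp [hv]

lemma exists_perm_comp_eq_of_dOne_eq {y z : V → ZMod 2} (h : dOne y = dOne z) :
    ∃ σ : Equiv.Perm V, z = y ∘ σ := by
  classical
  have hcard : Fintype.card {v // z v = 1} = Fintype.card {v // y v = 1} := by
    simpa only [Fintype.card_subtype, dOne] using h.symm
  set e := Fintype.equivOfCardEq hcard
  refine ⟨e.extendSubtype, funext fun v => ?_⟩
  by_cases hv : z v = 1
  · exact hv.trans (e.extendSubtype_mem v hv).symm
  · have hσv := e.extendSubtype_not_mem v hv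
    rcases (z v).eq_zero_or_eq_one with h₀ | h₁
    · rcases (y (e.extendSubtype v)).eq_zero_or_eq_one with h₀' | h₁'
      · exact h₀.trans h₀'.symm
      · exact absurd h₁' hσv
    · exact absurd h₁ hv

end Weight

lemma single_add_single_dotProduct_eq_one_iff {V : Type*} [Fintype V] [DecidableEq V]
    {a b c d : V} (hab : a ≠ b) (hcd : c ≠ d) :
    (Pi.single a 1 + Pi.single b 1 : V → ZMod 2) ⬝ᵥ (Pi.single c 1 + Pi.single d 1) = 1 ↔
      Xor (a = c ∨ a = d) (b = c ∨ b = d) := by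
  simp only [add_dotProduct, dotProduct_add, single_dotProduct, Pi.single_apply, one_mul, Xor]
  by_cases a = c <;> by_cases a = d <;> by_cases b = c <;> by_cases b = d <;> simp_all

lemma add_smul_single_add_single_eq_comp_swap {V : Type*} [DecidableEq V] (y : V → ZMod 2)
    (a b : V) :
    y + (y a + y b) • (Pi.single a 1 + Pi.single b 1) = y ∘ Equiv.swap a b := by
  funext v
  simp only [Pi.add_apply, Pi.smul_apply, Pi.single_apply, Function.comp_apply,
    Equiv.swap_apply_def, smul_eq_mul]
  split_ifs <;> subst_vars <;> grind

lemma Equivalence.comp_perm_of_mem_closure {V α : Type*} {R : (V → α) → (V → α) → Prop}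
    (hR : Equivalence R) {T : Set (Equiv.Perm V)} (hT : ∀ σ ∈ T, ∀ y, R y (y ∘ σ))
    {σ : Equiv.Perm V} (hσ : σ ∈ Subgroup.closure T) (y : V → α) : R y (y ∘ σ) := by
  induction hσ using Subgroup.closure_induction'' generalizing y with
  | mem σ hσ => exact hT σ hσ y
  | inv_mem σ hσ =>
    refine hR.symm ?_
    simpa [Function.comp_assoc] using hT σ hσ (y ∘ ⇑σ⁻¹)
  | one => exact hR.refl y
  | mul σ τ _ _ hσ hτ => exact hR.trans (hσ y) (hτ (y ∘ σ))

section SpanningTree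

variable {E V : Type*}

/-- A spanning tree of the multigraph whose edges `e : E` join `v₁ e` and `v₂ e`, given by parent
pointers: `edge v` joins `v` to `parent v`, and `rank` decreases along them. -/
structure RootedSpanningTree (v₁ v₂ : E → V) where
  root : V
  parent : V → V
  rank : V → ℕ
  rank_parent_lt : ∀ v, v ≠ root → rank (parent v) < rank v
  edge : ∀ v, v ≠ root → E
  ends_edge : ∀ v h, s(v₁ (edge v h), v₂ (edge v h)) = s(v, parent v)

namespace RootedSpanningTree

variable {v₁ v₂ : E → V}

lemma nonempty_of_connected
    (h : (SimpleGraph.fromRel fun u w =>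
        ∃ e, (v₁ e = u ∧ v₂ e = w) ∨ (v₁ e = w ∧ v₂ e = u)).Connected) :
    Nonempty (RootedSpanningTree v₁ v₂) := by
  classical
  obtain ⟨r⟩ := h.nonempty
  set Γ := SimpleGraph.fromRel fun u w => ∃ e, (v₁ e = u ∧ v₂ e = w) ∨ (v₁ e = w ∧ v₂ e = u)
  -- the parent of `v` is the next vertex on a shortest walk from `v` to `r`
  have closer : ∀ v, v ≠ r → ∃ u, Γ.dist u r < Γ.dist v r ∧ ∃ e, s(v₁ e, v₂ e) = s(v, u) := by
    intro v hv
    obtain ⟨p, hp⟩ := h.exists_walk_length_eq_dist v r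
    cases p with
    | nil => exact absurd rfl hv
    | @cons _ u _ hadj q =>
      refine ⟨u, ?_, ?_⟩
      · have := SimpleGraph.dist_le q
        rw [SimpleGraph.Walk.length_cons] at hp
        omega
      · obtain ⟨-, ⟨e, he⟩ | ⟨e, he⟩⟩ := hadj
        · exact ⟨e, Sym2.eq_iff.2 he⟩
        · exact ⟨e, Sym2.eq_iff.2 he.symm⟩
  choose p hp e he using closer
  exact ⟨{ root := r
           parent := fun v => if h : v = r then r else p v h
           rank := fun v => Γ.dist v r
           rank_parent_lt := fun v h => by simpa [h] using hp v h
           edge := e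
           ends_edge := fun v h => by simpa [h] using he v h }⟩

def potential [DecidableEq V] (T : RootedSpanningTree v₁ v₂) {G : Type*} [AddMonoid G]
    (val : V → G) (v : V) : G :=
  if h : v = T.root then 0 else
    have := T.rank_parent_lt v h
    potential T val (T.parent v) + val v
termination_by T.rank v

variable (T : RootedSpanningTree v₁ v₂)

lemma parent_ne (v : V) (h : v ≠ T.root) : T.parent v ≠ v :=
  fun hv => (T.rank_parent_lt v h).ne (congrArg T.rank hv)

lemma potential_of_ne [DecidableEq V] {G : Type*} [AddMonoid G] (val : V → G) {v : V}
    (h : v ≠ T.root) :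
    T.potential val v = T.potential val (T.parent v) + val v := by
  rw [potential, dif_neg h]

lemma swap_ends_edge [DecidableEq V] (v : V) (h : v ≠ T.root) :
    Equiv.swap (v₁ (T.edge v h)) (v₂ (T.edge v h)) = Equiv.swap v (T.parent v) := by
  rcases Sym2.eq_iff.1 (T.ends_edge v h) with ⟨h₁, h₂⟩ | ⟨h₁, h₂⟩
  · rw [h₁, h₂]
  · rw [h₁, h₂, Equiv.swap_comm]

lemma apply_add_apply_ends_edge {M : Type*} [AddCommMonoid M] (f : V → M) (v : V)
    (h : v ≠ T.root) : f (v₁ (T.edge v h)) + f (v₂ (T.edge v h)) = f v + f (T.parent v) := by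
  rcases Sym2.eq_iff.1 (T.ends_edge v h) with ⟨h₁, h₂⟩ | ⟨h₁, h₂⟩
  · rw [h₁, h₂]
  · rw [h₁, h₂, add_comm]

lemma closure_swap_parent_eq_top [DecidableEq V] [Finite V] :
    Subgroup.closure {σ | ∃ v ≠ T.root, σ = Equiv.swap v (T.parent v)} = ⊤ := by
  set H := Subgroup.closure {σ | ∃ v ≠ T.root, σ = Equiv.swap v (T.parent v)}
  have reach : ∀ n, ∀ v, T.rank v = n → ∃ g : H, g • T.root = v := by
    intro n
    induction n using Nat.strong_induction_on with
    | _ n ih =>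
      intro v hn
      by_cases hv : v = T.root
      · exact ⟨1, by rw [one_smul, hv]⟩
      obtain ⟨g, hg⟩ := ih _ (hn ▸ T.rank_parent_lt v hv) (T.parent v) rfl
      refine ⟨⟨_, Subgroup.subset_closure ⟨v, hv, rfl⟩⟩ * g, ?_⟩
      rw [mul_smul, hg]
      exact Equiv.swap_apply_right v (T.parent v)
  have := (MulAction.isPretransitive_iff_base T.root).2 fun v => reach _ v rfl
  refine closure_of_isSwap_of_isPretransitive ?_
  rintro σ ⟨v, hv, rfl⟩
  exact ⟨v, T.parent v, (T.parent_ne v hv).symm, rfl⟩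

end RootedSpanningTree

end SpanningTree

section Coboundary

variable {X V : Type*} [AddCommGroup X] [Module (ZMod 2) X] [Fintype V]
  {bd : X →ₗ[ZMod 2] (V → ZMod 2)}

lemma coboundary_apply (bd : X →ₗ[ZMod 2] (V → ZMod 2)) (y : V → ZMod 2) (x : X) :
    coboundary bd y x = y ⬝ᵥ bd x := by
  simp [coboundary, dotProduct]

lemma coboundary_add (y z : V → ZMod 2) :
    coboundary bd (y + z) = coboundary bd y + coboundary bd z :=
  LinearMap.ext fun x => by simp [coboundary_apply, add_dotProduct]

lemma coboundary_smul (c : ZMod 2) (y : V → ZMod 2) :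
    coboundary bd (c • y) = c • coboundary bd y :=
  LinearMap.ext fun x => by simp [coboundary_apply, smul_dotProduct]

end Coboundary

section Multigraph

variable {X V : Type*} [AddCommGroup X] [Module (ZMod 2) X] [Fintype V] [DecidableEq V]
  {ω : X →ₗ[ZMod 2] X →ₗ[ZMod 2] ZMod 2} {S : Set X} {v₁ v₂ : S → V}
  {bd : X →ₗ[ZMod 2] (V → ZMod 2)}

variable (hbd : ∀ e : S, bd e = Pi.single (v₁ e) 1 + Pi.single (v₂ e) 1)
include hbd

lemma apply_eq_coboundary (halt : ∀ x, ω x x = 0) (hspan : Submodule.span (ZMod 2) S = ⊤)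
    (hend : ∀ e, v₁ e ≠ v₂ e)
    (hline : ∀ e f : S, e ≠ f →
      (ω e.1 f.1 = 1 ↔ Xor (v₁ e = v₁ f ∨ v₁ e = v₂ f) (v₂ e = v₁ f ∨ v₂ e = v₂ f)))
    (x : X) : ω x = coboundary bd (bd x) := by
  suffices ω = (dotProductBilin (ZMod 2) (ZMod 2)).compl₁₂ bd bd by
    ext x'
    simp [this, coboundary_apply]
  refine LinearMap.ext_on hspan fun e he => LinearMap.ext_on hspan fun f hf => ?_
  lift e to S using he
  lift f to S using hf
  simp only [LinearMap.compl₁₂_apply, dotProductBilin_apply_apply, hbd]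
  rcases eq_or_ne e f with rfl | hef
  · simp [halt, dotProduct_add, hend e, (hend e).symm]
    decide
  · exact ZMod.eq_of_eq_one_iff
      ((hline e f hef).trans (single_add_single_dotProduct_eq_one_iff (hend e) (hend f)).symm)

lemma coboundary_apply_edge (y : V → ZMod 2) (e : S) :
    coboundary bd y e = y (v₁ e) + y (v₂ e) := by
  simp [coboundary_apply, hbd, dotProduct_add]

lemma coboundary_one (hspan : Submodule.span (ZMod 2) S = ⊤) : coboundary bd 1 = 0 :=
  LinearMap.ext_on hspan fun e he => by
    lift e to S using he
    simp [coboundary_apply_edge hbd, CharTwo.add_self_eq_zero]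

lemma sum_apply_eq_zero (hspan : Submodule.span (ZMod 2) S = ⊤) (x : X) : ∑ v, bd x v = 0 := by
  simpa [coboundary_apply, one_dotProduct] using congrArg (· x) (coboundary_one hbd hspan)

lemma exists_sub_coboundary_apply_edge_eq_zero (T : RootedSpanningTree v₁ v₂)
    (β : Module.Dual (ZMod 2) X) : ∃ y, ∀ v h, (β - coboundary bd y) (T.edge v h) = 0 := by
  refine ⟨T.potential fun v => if h : v = T.root then 0 else β (T.edge v h), fun v h => ?_⟩
  rw [LinearMap.sub_apply, coboundary_apply_edge hbd, T.apply_add_apply_ends_edge _ v h,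
    T.potential_of_ne _ h, dif_neg h, add_comm, ← add_assoc, CharTwo.add_self_eq_zero, zero_add,
    sub_self]

variable (hω : ∀ x, ω x = coboundary bd (bd x))
include hω

lemma coboundary_comp_swap (y : V → ZMod 2) (e : S) :
    coboundary bd (y ∘ Equiv.swap (v₁ e) (v₂ e)) = coboundary bd y + coboundary bd y e • ω e := by
  rw [← add_smul_single_add_single_eq_comp_swap, ← hbd, coboundary_add, coboundary_smul, hω,
    coboundary_apply_edge hbd]

lemma dualStep_comp_swap {ρ : Module.Dual (ZMod 2) X} {e : S} (hρ : ρ e = 0) (y : V → ZMod 2) :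
    DualStep ω S (coboundary bd y + ρ) (coboundary bd (y ∘ Equiv.swap (v₁ e) (v₂ e)) + ρ) := by
  refine ⟨e, e.2, ?_⟩
  rw [coboundary_comp_swap hbd hω, LinearMap.add_apply, hρ, add_zero, add_right_comm]

lemma dualStep_add_bd {ρ : Module.Dual (ZMod 2) X} {e : S} (hρ : ρ e = 1) {y : V → ZMod 2}
    (h₁ : y (v₁ e) = 0) (h₂ : y (v₂ e) = 0) :
    DualStep ω S (coboundary bd y + ρ) (coboundary bd (y + bd e) + ρ) := by
  refine ⟨e, e.2, ?_⟩
  rw [LinearMap.add_apply, coboundary_apply_edge hbd, h₁, h₂, hρ, coboundary_add, ← hω]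
  simp only [add_zero, zero_add, one_smul]
  abel

lemma exists_dOne_eq_of_reflTransGen {y : V → ZMod 2} {γ : Module.Dual (ZMod 2) X}
    (h : ReflTransGen (DualStep ω S) (coboundary bd y) γ) :
    ∃ z, coboundary bd z = γ ∧ dOne z = dOne y := by
  induction h with
  | refl => exact ⟨y, rfl, rfl⟩
  | tail _ hstep ih =>
    obtain ⟨z, rfl, hz⟩ := ih
    obtain ⟨e, he, rfl⟩ := hstep
    exact ⟨z ∘ Equiv.swap (v₁ ⟨e, he⟩) (v₂ ⟨e, he⟩), coboundary_comp_swap hbd hω z ⟨e, he⟩,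
      (dOne_comp_perm z _).trans hz⟩

variable (halt : ∀ x, ω x x = 0)
include halt

lemma reflTransGen_of_dOne_eq (T : RootedSpanningTree v₁ v₂) {ρ : Module.Dual (ZMod 2) X}
    (hρ : ∀ v h, ρ (T.edge v h) = 0)
    {y z : V → ZMod 2} (h : dOne y = dOne z) :
    ReflTransGen (DualStep ω S) (coboundary bd y + ρ) (coboundary bd z + ρ) := by
  obtain ⟨σ, rfl⟩ := exists_perm_comp_eq_of_dOne_eq h
  refine ((equivalence_reflTransGen_dualStep halt).comap
    fun y => coboundary bd y + ρ).comp_perm_of_mem_closure ?_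
    (T.closure_swap_parent_eq_top.symm ▸ Subgroup.mem_top σ) y
  rintro _ ⟨v, hv, rfl⟩ y
  rw [← T.swap_ends_edge v hv]
  exact .single (dualStep_comp_swap hbd hω (hρ v hv) y)

lemma reflTransGen_of_dOne_modEq (T : RootedSpanningTree v₁ v₂) {ρ : Module.Dual (ZMod 2) X}
    (hρ : ∀ v h, ρ (T.edge v h) = 0)
    {e₀ : S} (hρe₀ : ρ e₀ = 1) (hend₀ : v₁ e₀ ≠ v₂ e₀) {y z : V → ZMod 2}
    (h : dOne y ≡ dOne z [MOD 2]) :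
    ReflTransGen (DualStep ω S) (coboundary bd y + ρ) (coboundary bd z + ρ) := by
  set R := Function.onFun (ReflTransGen (DualStep ω S)) fun y => coboundary bd y + ρ
  have hR : Equivalence R := (equivalence_reflTransGen_dualStep halt).comap _
  have raise : ∀ y, dOne y + 2 ≤ Fintype.card V → ∃ y', dOne y' = dOne y + 2 ∧ R y y' := by
    intro y hy
    obtain ⟨s, hs, hcard⟩ := Finset.exists_subset_card_eq
      (s := Finset.univ \ {v₁ e₀, v₂ e₀}) (n := dOne y) (by
        rw [Finset.card_sdiff_of_subset (Finset.subset_univ _), Finset.card_univ,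
          Finset.card_pair hend₀]
        omega)
    set w : V → ZMod 2 := fun v => if v ∈ s then 1 else 0
    have h₁ : w (v₁ e₀) = 0 := if_neg fun hv => by simpa using hs hv
    have h₂ : w (v₂ e₀) = 0 := if_neg fun hv => by simpa using hs hv
    refine ⟨w + bd e₀, ?_, hR.trans (reflTransGen_of_dOne_eq hbd hω halt T hρ ?_)
      (.single (dualStep_add_bd hbd hω hρe₀ h₁ h₂))⟩
    · rw [hbd, ← add_assoc, dOne_add_single, dOne_add_single h₁, dOne_indicator, hcard]
      simpa [Pi.single_apply, hend₀.symm] using h₂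
    · rw [dOne_indicator, hcard]
  have climb : ∀ k y z, dOne z = dOne y + 2 * k → R y z := by
    intro k
    induction k with
    | zero => exact fun y z h => reflTransGen_of_dOne_eq hbd hω halt T hρ (by omega)
    | succ k ih =>
      intro y z hz
      have := dZero_add_dOne z
      obtain ⟨y', hy', hyy'⟩ := raise y (by omega)
      exact hR.trans hyy' (ih y' z (by omega))
  rcases le_total (dOne y) (dOne z) with hyz | hzy
  · exact climb ((dOne z - dOne y) / 2) y z (by unfold Nat.ModEq at h; omega)
  · exact hR.symm (climb ((dOne y - dOne z) / 2) z y (by unfold Nat.ModEq at h; omega))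

lemma reflTransGen_coboundary_of_dFun_eq (T : RootedSpanningTree v₁ v₂)
    (hspan : Submodule.span (ZMod 2) S = ⊤) {y z : V → ZMod 2} (h : dFun y = dFun z) :
    ReflTransGen (DualStep ω S) (coboundary bd y) (coboundary bd z) := by
  have hy := dZero_add_dOne y
  have hz := dZero_add_dOne z
  have h₀ : ∀ v h, (0 : Module.Dual (ZMod 2) X) (T.edge v h) = 0 := fun _ _ => rfl
  rcases (show dOne y = dOne z ∨ dOne y = dOne (z + 1) by
      rw [dOne_add_one]; unfold dFun at h; omega) with h' | h'
  · simpa using reflTransGen_of_dOne_eq hbd hω halt T h₀ h'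
  · simpa [coboundary_add, coboundary_one hbd hspan] using
      reflTransGen_of_dOne_eq hbd hω halt T h₀ h'

lemma reflTransGen_add_of_notMem_range (T : RootedSpanningTree v₁ v₂)
    (hspan : Submodule.span (ZMod 2) S = ⊤) (hend : ∀ e, v₁ e ≠ v₂ e)
    {β : Module.Dual (ZMod 2) X} (hβ : β ∉ Set.range (coboundary bd)) (x : X) :
    ReflTransGen (DualStep ω S) β (β + ω x) := by
  obtain ⟨y, hy⟩ := exists_sub_coboundary_apply_edge_eq_zero hbd T β
  obtain ⟨e₀, he₀⟩ : ∃ e₀ : S, (β - coboundary bd y) e₀ = 1 := by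
    by_contra! hne
    refine hβ ⟨y, (sub_eq_zero.1 (LinearMap.ext_on hspan fun e he => ?_)).symm⟩
    lift e to S using he
    exact (_ : ZMod 2).eq_zero_or_eq_one.resolve_right (hne e)
  have hpar : dOne y ≡ dOne (y + bd x) [MOD 2] := by
    rw [← ZMod.natCast_eq_natCast_iff, natCast_dOne, natCast_dOne]
    simp [Finset.sum_add_distrib, sum_apply_eq_zero hbd hspan]
  convert reflTransGen_of_dOne_modEq hbd hω halt T hy he₀ (hend e₀) hpar using 1
  · abel
  · rw [coboundary_add, ← hω]
    abel

end Multigraph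

theorem stmt2_general {X V : Type*} [AddCommGroup X] [Module (ZMod 2) X]
    [Fintype V] [DecidableEq V]
    (ω : X →ₗ[ZMod 2] X →ₗ[ZMod 2] ZMod 2) (halt : ∀ x, ω x x = 0)
    (S : Set X)
    (hspan : Submodule.span (ZMod 2) S = ⊤)
    -- the multigraph structure: endpoints of each edge `e ∈ S`
    (v₁ v₂ : S → V) (hend : ∀ e, v₁ e ≠ v₂ e)
    -- the multigraph is connected
    (hmconn : (SimpleGraph.fromRel fun u w =>
        ∃ e : S, (v₁ e = u ∧ v₂ e = w) ∨ (v₁ e = w ∧ v₂ e = u)).Connected)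
    -- `G(S)` is the line graph of the multigraph: `ω(e,f) = 1` iff `e` and `f`
    -- have exactly one common endpoint
    (hline : ∀ e f : S, e ≠ f →
      (ω e.1 f.1 = 1 ↔
        Xor' (v₁ e = v₁ f ∨ v₁ e = v₂ f) (v₂ e = v₁ f ∨ v₂ e = v₂ f)))
    -- the boundary map `∂ : X → ⟨V⟩` sending each edge to the sum of its endpoints
    (bd : X →ₗ[ZMod 2] (V → ZMod 2))
    (hbd : ∀ e : S, bd e.1 = Pi.single (v₁ e) 1 + Pi.single (v₂ e) 1)
    (β γ : Module.Dual (ZMod 2) X) :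
    (∃ g ∈ transvectionGroup ω S, ∀ x, γ x = β (g x)) ↔
      (γ - β ∈ LinearMap.range ω ∧
        (β ∉ Set.range (coboundary bd) ∨
          (β ∈ Set.range (coboundary bd) ∧
            ∃ y z : V → ZMod 2, coboundary bd y = β ∧ coboundary bd z = γ ∧
              dFun y = dFun z))) := by
  have hω := apply_eq_coboundary hbd halt hspan hend hline
  obtain ⟨T⟩ := RootedSpanningTree.nonempty_of_connected hmconn
  rw [exists_mem_transvectionGroup_iff_reflTransGen halt]
  constructor
  · intro h
    refine ⟨sub_mem_range_of_reflTransGen_dualStep h, ?_⟩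
    by_cases hβ : β ∈ Set.range (coboundary bd)
    · obtain ⟨y, rfl⟩ := hβ
      obtain ⟨z, rfl, hz⟩ := exists_dOne_eq_of_reflTransGen hbd hω h
      have := dZero_add_dOne y
      have := dZero_add_dOne z
      exact Or.inr ⟨⟨y, rfl⟩, y, z, rfl, rfl, by unfold dFun; omega⟩
    · exact Or.inl hβ
  · rintro ⟨⟨x, hx⟩, hβ | ⟨-, y, z, rfl, rfl, hyz⟩⟩
    · simpa [hx] using reflTransGen_add_of_notMem_range hbd hω halt T hspan hend hβ x
    · exact reflTransGen_coboundary_of_dFun_eq hbd hω halt T hspan hyz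

/-- `K = 𝔽₂`, `S` a basis not of orthogonal type with `G(S)`
connected, so that `G(S)` is the line graph of a connected multigraph `(V, E)`
with `S` identified with `E` (here each edge `e ∈ S` has distinct endpoints
`v₁ e ≠ v₂ e`, and adjacency in `G(S)` corresponds to having exactly one common
endpoint).  Then `β, γ ∈ X*` are in the same `Tr(S)*`-orbit iff
`γ - β ∈ im ω` and either `β ∉ im δ`, or `β ∈ im δ` and `d(y) = d(z)` for some
`y, z` with `δ y = β`, `δ z = γ`. -/
theorem stmt2 {X V : Type*} [AddCommGroup X] [Module (ZMod 2) X]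
    [FiniteDimensional (ZMod 2) X] [Fintype V] [DecidableEq V]
    (ω : X →ₗ[ZMod 2] X →ₗ[ZMod 2] ZMod 2) (halt : ∀ x, ω x x = 0)
    (S : Set X) (hind : LinearIndependent (ZMod 2) ((↑) : S → X))
    (hspan : Submodule.span (ZMod 2) S = ⊤)
    (hnotorth : ¬ IsOrthogonalType ω S)
    (hconn : (transGraph ω S).Connected)
    -- the multigraph structure: endpoints of each edge `e ∈ S`
    (v₁ v₂ : S → V) (hend : ∀ e, v₁ e ≠ v₂ e)
    -- the multigraph is connected
    (hmconn : (SimpleGraph.fromRel fun u w =>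
        ∃ e : S, (v₁ e = u ∧ v₂ e = w) ∨ (v₁ e = w ∧ v₂ e = u)).Connected)
    -- `G(S)` is the line graph of the multigraph: `ω(e,f) = 1` iff `e` and `f`
    -- have exactly one common endpoint
    (hline : ∀ e f : S, e ≠ f →
      (ω e.1 f.1 = 1 ↔
        Xor' (v₁ e = v₁ f ∨ v₁ e = v₂ f) (v₂ e = v₁ f ∨ v₂ e = v₂ f)))
    -- the boundary map `∂ : X → ⟨V⟩` sending each edge to the sum of its endpoints
    (bd : X →ₗ[ZMod 2] (V → ZMod 2))
    (hbd : ∀ e : S, bd e.1 = Pi.single (v₁ e) 1 + Pi.single (v₂ e) 1)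
    (β γ : Module.Dual (ZMod 2) X) :
    (∃ g ∈ transvectionGroup ω S, ∀ x, γ x = β (g x)) ↔
      (γ - β ∈ LinearMap.range ω ∧
        (β ∉ Set.range (coboundary bd) ∨
          (β ∈ Set.range (coboundary bd) ∧
            ∃ y z : V → ZMod 2, coboundary bd y = β ∧ coboundary bd z = γ ∧
              dFun y = dFun z))) :=
  stmt2_general ω halt S hspan v₁ v₂ hend hmconn hline bd hbd β γ
end

section
/- Let S be a spanning subset of X, let {S_i}_{i∈I} be the connected components of the graph G(S), and let X_i = Span(S_i). Then: (1) each X_i is Tr(S)-invariant, the restriction maps g ↦ g|_{X_i} are group homomorphisms from Tr(S) to Tr(S_i)|_{X_i}, and together they give a group isomorphism Tr(S) ≅ ∏_{i∈I} Tr(S_i)|_{X_i}; (2) two elements α, β ∈ X* belong to the same orbit of Tr(S)* if and only if, for every i ∈ I, the restrictions α|_{X_i} and β|_{X_i} belong to the same orbit of (Tr(S_i)|_{X_i})*. -/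
/-- The vertex set `S_i ⊆ S` of the connected component `i` of `G(S)`,
viewed as a subset of `X`. -/
def compSet {K X : Type*} [Field K] [AddCommGroup X] [Module K X]
    (ω : X →ₗ[K] X →ₗ[K] K) (S : Set X)
    (i : (transGraph ω S).ConnectedComponent) : Set X :=
  Subtype.val '' {v : S | (transGraph ω S).connectedComponentMk v = i}

set_option linter.unusedSectionVars false

section helpers
variable {K X : Type*} [Field K] [AddCommGroup X] [Module K X]
variable {ω : X →ₗ[K] X →ₗ[K] K} {S : Set X}

lemma tv_compSet_subset (i : (transGraph ω S).ConnectedComponent) : compSet ω S i ⊆ S := by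
  rintro s ⟨v, _, rfl⟩; exact v.2

lemma tv_mem_compSet {s : X} (hs : s ∈ S) :
    s ∈ compSet ω S ((transGraph ω S).connectedComponentMk ⟨s, hs⟩) :=
  ⟨⟨s, hs⟩, rfl, rfl⟩

lemma tv_comp_orth {i j : (transGraph ω S).ConnectedComponent} (hij : i ≠ j)
    {s t : X} (hs : s ∈ compSet ω S i) (ht : t ∈ compSet ω S j) : ω t s = 0 := by
  obtain ⟨u, hu, rfl⟩ := hs
  obtain ⟨v, hv, rfl⟩ := ht
  by_contra h
  have hne : v ≠ u := fun hvu => hij ((hvu ▸ hv : _ = j) ▸ hu.symm ▸ rfl)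
  have hadj : (transGraph ω S).Adj v u := by
    rw [transGraph, SimpleGraph.fromRel_adj]
    exact ⟨hne, Or.inl h⟩
  exact hij (hu ▸ hv ▸ (SimpleGraph.ConnectedComponent.sound hadj.reachable).symm)

lemma tv_span_orth {i j : (transGraph ω S).ConnectedComponent} (hij : i ≠ j)
    {s : X} (hs : s ∈ compSet ω S i)
    {x : X} (hx : x ∈ Submodule.span K (compSet ω S j)) : ω x s = 0 := by
  have hle : Submodule.span K (compSet ω S j) ≤ LinearMap.ker (ω.flip s) := by
    rw [Submodule.span_le]
    intro t ht
    simpa using tv_comp_orth hij hs ht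
  simpa using hle hx

end helpers

section helpers2
variable {K X : Type*} [Field K] [AddCommGroup X] [Module K X]
variable {ω : X →ₗ[K] X →ₗ[K] K}

lemma tv_gen_inv_apply (halt : ∀ x, ω x x = 0) {f : Equiv.Perm X} {s : X} {k : K}
    (hf : ∀ x, f x = x + (k * ω x s) • s) (x : X) :
    f⁻¹ x = x + ((-k) * ω x s) • s := by
  have key : f (x + ((-k) * ω x s) • s) = x := by
    rw [hf]
    simp only [map_add, map_smul, LinearMap.add_apply, LinearMap.smul_apply, halt,
      smul_eq_mul, mul_zero, add_zero]
    module
  calc f⁻¹ x = f⁻¹ (f (x + ((-k) * ω x s) • s)) := by rw [key]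
    _ = x + ((-k) * ω x s) • s := f.symm_apply_apply _

/-- Every element of a transvection group is linear. -/
lemma tv_linear {S' : Set X} {g : Equiv.Perm X} (hg : g ∈ transvectionGroup ω S') :
    ∃ L : X ≃ₗ[K] X, ∀ x, g x = L x := by
  induction hg using Subgroup.closure_induction with
  | mem f hf =>
    obtain ⟨s, _, k, _, hf⟩ := hf
    have hadd : ∀ x y : X, f (x + y) = f x + f y := by
      intro x y; simp only [hf, map_add, LinearMap.add_apply]; module
    have hsmul : ∀ (c : K) (x : X), f (c • x) = c • f x := by
      intro c x; simp only [hf, map_smul, LinearMap.smul_apply, smul_eq_mul]; module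
    exact ⟨{ toFun := f, invFun := f.symm, left_inv := f.left_inv, right_inv := f.right_inv,
             map_add' := hadd, map_smul' := hsmul }, fun x => rfl⟩
  | one => exact ⟨LinearEquiv.refl K X, fun x => rfl⟩
  | mul g h _ _ ihg ihh =>
    obtain ⟨Lg, hLg⟩ := ihg; obtain ⟨Lh, hLh⟩ := ihh
    exact ⟨Lh ≪≫ₗ Lg, fun x => by simp [Equiv.Perm.mul_apply, hLg, hLh]⟩
  | inv g _ ihg =>
    obtain ⟨L, hL⟩ := ihg
    refine ⟨L.symm, fun x => ?_⟩
    have : g (L.symm x) = x := by rw [hL]; simp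
    calc g⁻¹ x = g⁻¹ (g (L.symm x)) := by rw [this]
      _ = L.symm x := g.symm_apply_apply _

/-- Generic: if all generators fix `W` pointwise, so does the closure. -/
lemma perm_closure_fix {A : Set (Equiv.Perm X)} {W : Set X}
    (h : ∀ f ∈ A, ∀ x ∈ W, f x = x) :
    ∀ g ∈ Subgroup.closure A, ∀ x ∈ W, g x = x := by
  intro g hg
  induction hg using Subgroup.closure_induction with
  | mem f hf => exact h f hf
  | one => intro x _; rfl
  | mul g h _ _ ihg ihh => intro x hx; simp [Equiv.Perm.mul_apply, ihh x hx, ihg x hx]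
  | inv g _ ihg =>
    intro x hx
    calc g⁻¹ x = g⁻¹ (g x) := by rw [ihg x hx]
      _ = x := g.symm_apply_apply _

/-- Generic: if all generators map `W` into `W` in both directions, so does the closure. -/
lemma perm_closure_maps {A : Set (Equiv.Perm X)} {W : Set X}
    (h : ∀ f ∈ A, ∀ x ∈ W, f x ∈ W ∧ f⁻¹ x ∈ W) :
    ∀ g ∈ Subgroup.closure A, ∀ x ∈ W, g x ∈ W ∧ g⁻¹ x ∈ W := by
  intro g hg
  induction hg using Subgroup.closure_induction with
  | mem f hf => exact h f hf
  | one => intro x hx; exact ⟨hx, hx⟩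
  | mul g h _ _ ihg ihh =>
    intro x hx
    refine ⟨(ihg _ (ihh x hx).1).1, ?_⟩
    have : (g * h)⁻¹ x = h⁻¹ (g⁻¹ x) := by simp [Equiv.Perm.mul_apply]
    rw [this]; exact (ihh _ (ihg x hx).2).2
  | inv g _ ihg => intro x hx; rw [inv_inv]; exact ⟨(ihg x hx).2, (ihg x hx).1⟩

end helpers2

section helpers3
variable {K X : Type*} [Field K] [AddCommGroup X] [Module K X]
variable {ω : X →ₗ[K] X →ₗ[K] K} {S : Set X}

/-- Generators over `compSet j` fix `span (compSet i)` pointwise when `i ≠ j`. -/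
lemma tv_gen_fix (halt : ∀ x, ω x x = 0) {i j : (transGraph ω S).ConnectedComponent}
    (hij : j ≠ i) {f : Equiv.Perm X} (hf : f ∈ transvectionSet ω (compSet ω S j)) :
    ∀ x ∈ Submodule.span K (compSet ω S i), f x = x ∧ f⁻¹ x = x := by
  obtain ⟨s, hs, k, _, hf⟩ := hf
  intro x hx
  have h0 : ω x s = 0 := tv_span_orth hij hs hx
  constructor
  · rw [hf, h0]; simp
  · rw [tv_gen_inv_apply halt hf, h0]; simp

/-- Elements of `Tr(compSet j)` fix `span (compSet i)` pointwise when `i ≠ j`. -/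
lemma tv_grp_fix (halt : ∀ x, ω x x = 0) {i j : (transGraph ω S).ConnectedComponent}
    (hij : j ≠ i) {g : Equiv.Perm X} (hg : g ∈ transvectionGroup ω (compSet ω S j)) :
    ∀ x ∈ Submodule.span K (compSet ω S i), g x = x :=
  perm_closure_fix (fun f hf x hx => (tv_gen_fix halt hij hf x hx).1) g hg

/-- Elements of `Tr(compSet i)` map `span (compSet i)` to itself. -/
lemma tv_grp_maps (halt : ∀ x, ω x x = 0) {i : (transGraph ω S).ConnectedComponent}
    {g : Equiv.Perm X} (hg : g ∈ transvectionGroup ω (compSet ω S i)) :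
    ∀ x ∈ Submodule.span K (compSet ω S i), g x ∈ Submodule.span K (compSet ω S i) ∧
      g⁻¹ x ∈ Submodule.span K (compSet ω S i) := by
  refine perm_closure_maps ?_ g hg
  rintro f ⟨s, hs, k, _, hf⟩ x hx
  have hsm : s ∈ Submodule.span K (compSet ω S i) := Submodule.subset_span hs
  constructor
  · rw [hf]; exact Submodule.add_mem _ hx (Submodule.smul_mem _ _ hsm)
  · rw [tv_gen_inv_apply halt hf]; exact Submodule.add_mem _ hx (Submodule.smul_mem _ _ hsm)

/-- Elements of `Tr(S)` map each `span (compSet i)` to itself. -/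
lemma tv_full_maps (halt : ∀ x, ω x x = 0) (i : (transGraph ω S).ConnectedComponent)
    {g : Equiv.Perm X} (hg : g ∈ transvectionGroup ω S) :
    ∀ x ∈ Submodule.span K (compSet ω S i), g x ∈ Submodule.span K (compSet ω S i) := by
  refine fun x hx => (perm_closure_maps ?_ g hg x hx).1
  rintro f ⟨s, hsS, k, _, hf⟩ x hx
  by_cases hc : (transGraph ω S).connectedComponentMk ⟨s, hsS⟩ = i
  · have hs : s ∈ compSet ω S i := hc ▸ tv_mem_compSet hsS
    have hsm : s ∈ Submodule.span K (compSet ω S i) := Submodule.subset_span hs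
    constructor
    · rw [hf]; exact Submodule.add_mem _ hx (Submodule.smul_mem _ _ hsm)
    · rw [tv_gen_inv_apply halt hf]; exact Submodule.add_mem _ hx (Submodule.smul_mem _ _ hsm)
  · have h0 : ω x s = 0 := tv_span_orth hc (tv_mem_compSet hsS) hx
    constructor
    · rw [hf, h0]; simpa using hx
    · rw [tv_gen_inv_apply halt hf, h0]; simpa using hx

/-- (1b) strengthened: restriction of `g ∈ Tr(S)` to `X_i` agrees with some
`g' ∈ Tr(compSet i)`, in both directions. -/
lemma tv_restrict (halt : ∀ x, ω x x = 0) (i : (transGraph ω S).ConnectedComponent)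
    {g : Equiv.Perm X} (hg : g ∈ transvectionGroup ω S) :
    ∃ g' ∈ transvectionGroup ω (compSet ω S i),
      ∀ x ∈ Submodule.span K (compSet ω S i), g x = g' x ∧ g⁻¹ x = g'⁻¹ x := by
  induction hg using Subgroup.closure_induction with
  | mem f hf =>
    obtain ⟨s, hsS, k, hk, hfx⟩ := hf
    by_cases hc : (transGraph ω S).connectedComponentMk ⟨s, hsS⟩ = i
    · have hs : s ∈ compSet ω S i := hc ▸ tv_mem_compSet hsS
      exact ⟨f, Subgroup.subset_closure ⟨s, hs, k, hk, hfx⟩, fun x _ => ⟨rfl, rfl⟩⟩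
    · refine ⟨1, one_mem _, fun x hx => ?_⟩
      have := tv_gen_fix halt hc ⟨s, tv_mem_compSet hsS, k, hk, hfx⟩ x hx
      exact ⟨this.1, this.2⟩
  | one => exact ⟨1, one_mem _, fun x _ => ⟨rfl, rfl⟩⟩
  | mul g h _ _ ihg ihh =>
    obtain ⟨g', hg', hgg⟩ := ihg; obtain ⟨h', hh', hhh⟩ := ihh
    refine ⟨g' * h', mul_mem hg' hh', fun x hx => ?_⟩
    constructor
    · have hx' : h' x ∈ Submodule.span K (compSet ω S i) := (tv_grp_maps halt hh' x hx).1
      calc (g * h) x = g (h x) := rfl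
        _ = g (h' x) := by rw [(hhh x hx).1]
        _ = g' (h' x) := (hgg _ hx').1
        _ = (g' * h') x := rfl
    · have hx' : g'⁻¹ x ∈ Submodule.span K (compSet ω S i) := (tv_grp_maps halt hg' x hx).2
      calc (g * h)⁻¹ x = h⁻¹ (g⁻¹ x) := by simp [Equiv.Perm.mul_apply]
        _ = h⁻¹ (g'⁻¹ x) := by rw [(hgg x hx).2]
        _ = h'⁻¹ (g'⁻¹ x) := (hhh _ hx').2
        _ = (g' * h')⁻¹ x := by simp [Equiv.Perm.mul_apply]
  | inv g _ ihg =>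
    obtain ⟨g', hg', hgg⟩ := ihg
    refine ⟨g'⁻¹, inv_mem hg', fun x hx => ⟨(hgg x hx).2, ?_⟩⟩
    rw [inv_inv, inv_inv]; exact (hgg x hx).1

end helpers3

section helpers4
variable {K X : Type*} [Field K] [AddCommGroup X] [Module K X]
variable {ω : X →ₗ[K] X →ₗ[K] K} {S : Set X}

lemma tv_mono {A B : Set X} (h : A ⊆ B) :
    transvectionGroup ω A ≤ transvectionGroup ω B := by
  apply Subgroup.closure_mono
  rintro f ⟨s, hs, k, hk, hf⟩
  exact ⟨s, h hs, k, hk, hf⟩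

/-- There is a finite set of components whose spans together cover `X`. -/
lemma tv_finite_cover [FiniteDimensional K X] (hspan : Submodule.span K S = ⊤) :
    ∃ T : Finset (transGraph ω S).ConnectedComponent,
      (⊤ : Submodule K X) ≤ ⨆ i ∈ T, Submodule.span K (compSet ω S i) := by
  classical
  obtain ⟨n, v, hv⟩ := Module.Finite.exists_fin (R := K) (M := X)
  have hmem : ∀ x : X, x ∈ ⨆ i, Submodule.span K (compSet ω S i) := by
    intro x
    have : Submodule.span K S ≤ ⨆ i, Submodule.span K (compSet ω S i) := by
      rw [Submodule.span_le]
      intro s hs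
      exact Submodule.mem_iSup_of_mem _ (Submodule.subset_span (tv_mem_compSet hs))
    exact this (hspan ▸ Submodule.mem_top)
  have hT : ∀ m : Fin n, ∃ T : Finset (transGraph ω S).ConnectedComponent,
      v m ∈ ⨆ i ∈ T, Submodule.span K (compSet ω S i) := by
    intro m; exact Submodule.mem_iSup_iff_exists_finset.mp (hmem (v m))
  choose Ts hTs using hT
  refine ⟨Finset.univ.biUnion Ts, ?_⟩
  rw [← hv, Submodule.span_le]
  rintro x ⟨m, rfl⟩
  refine SetLike.le_def.mp ?_ (hTs m)
  refine iSup_le fun i => iSup_le fun hi => ?_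
  exact le_iSup₂_of_le i (Finset.mem_biUnion.mpr ⟨m, Finset.mem_univ m, hi⟩) le_rfl

/-- If the spans of components in `T` cover `X`, then for `j ∉ T` the group
`Tr(compSet j)` is trivial. -/
lemma tv_off_cover_trivial (halt : ∀ x, ω x x = 0)
    {T : Finset (transGraph ω S).ConnectedComponent}
    (hT : (⊤ : Submodule K X) ≤ ⨆ i ∈ T, Submodule.span K (compSet ω S i))
    {j : (transGraph ω S).ConnectedComponent} (hj : j ∉ T)
    {g : Equiv.Perm X} (hg : g ∈ transvectionGroup ω (compSet ω S j)) : g = 1 := by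
  have hsub : transvectionSet ω (compSet ω S j) ⊆ {(1 : Equiv.Perm X)} := by
    rintro f ⟨s, hs, k, _, hf⟩
    have h0 : ∀ x : X, ω x s = 0 := by
      intro x
      have hx : x ∈ ⨆ i ∈ T, Submodule.span K (compSet ω S i) := hT Submodule.mem_top
      have hker : (⨆ i ∈ T, Submodule.span K (compSet ω S i)) ≤ LinearMap.ker (ω.flip s) := by
        refine iSup_le fun i => iSup_le fun hi => ?_
        rw [Submodule.span_le]
        intro t ht
        have hij : j ≠ i := fun h => hj (h ▸ hi)
        simpa using tv_comp_orth hij hs ht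
      simpa using hker hx
    have : f = 1 := by
      ext x; rw [hf, h0]; simp
    simp [this]
  have : transvectionGroup ω (compSet ω S j) ≤ ⊥ := by
    rw [transvectionGroup]
    exact (Subgroup.closure_le ⊥).mpr (by simpa using hsub)
  exact Subgroup.mem_bot.mp (this hg)

/-- Product construction for (1d). -/
lemma tv_prod (halt : ∀ x, ω x x = 0)
    (g : (transGraph ω S).ConnectedComponent → Equiv.Perm X)
    (hg : ∀ i, g i ∈ transvectionGroup ω (compSet ω S i))
    (T : Finset (transGraph ω S).ConnectedComponent) :
    ∃ g₀ ∈ transvectionGroup ω S,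
      (∀ i ∈ T, ∀ x ∈ Submodule.span K (compSet ω S i), g₀ x = g i x) ∧
      (∀ j ∉ T, ∀ x ∈ Submodule.span K (compSet ω S j), g₀ x = x) := by
  classical
  induction T using Finset.induction_on with
  | empty => exact ⟨1, one_mem _, fun i hi => absurd hi (Finset.notMem_empty i),
      fun j _ x _ => rfl⟩
  | @insert a T ha ih =>
    obtain ⟨g₀, hg₀, hin, hout⟩ := ih
    have hga : g a ∈ transvectionGroup ω S := tv_mono (tv_compSet_subset a) (hg a)
    refine ⟨g₀ * g a, mul_mem hg₀ hga, ?_, ?_⟩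
    · intro i hi x hx
      rcases Finset.mem_insert.mp hi with rfl | hiT
      · have hax : g i x ∈ Submodule.span K (compSet ω S i) := (tv_grp_maps halt (hg i) x hx).1
        calc (g₀ * g i) x = g₀ (g i x) := rfl
          _ = g i x := hout i ha _ hax
      · have hfix : g a x = x := tv_grp_fix halt (fun h : a = i => ha (h ▸ hiT)) (hg a) x hx
        calc (g₀ * g a) x = g₀ (g a x) := rfl
          _ = g₀ x := by rw [hfix]
          _ = g i x := hin i hiT x hx
    · intro j hj x hx
      have hja : a ≠ j := fun h => hj (h ▸ Finset.mem_insert_self a T)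
      have hfix : g a x = x := tv_grp_fix halt hja (hg a) x hx
      calc (g₀ * g a) x = g₀ (g a x) := rfl
        _ = g₀ x := by rw [hfix]
        _ = x := hout j (fun h => hj (Finset.mem_insert_of_mem h)) x hx

end helpers4


/-- with `{S_i}` the connected components of `G(S)` and
`X_i = Span S_i`:
(1) each `X_i` is `Tr(S)`-invariant; the restriction of each `g ∈ Tr(S)` to
`X_i` agrees with an element of `Tr(S_i)`; the combined restriction map is
injective on `Tr(S)` and surjective onto the product of the restricted groups
`Tr(S_i)|_{X_i}` — i.e. `Tr(S) ≅ ∏_i Tr(S_i)|_{X_i}`;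
(2) `α, β ∈ X*` are in the same orbit of `Tr(S)*` iff for each `i` the
restrictions `α|_{X_i}`, `β|_{X_i}` are in the same orbit of
`(Tr(S_i)|_{X_i})*`. -/
theorem stmt3 {K X : Type*} [Field K] [AddCommGroup X] [Module K X]
    [FiniteDimensional K X]
    (ω : X →ₗ[K] X →ₗ[K] K) (halt : ∀ x, ω x x = 0)
    (S : Set X) (hspan : Submodule.span K S = ⊤) :
    -- (1a) each `X_i` is `Tr(S)`-invariant
    (∀ g ∈ transvectionGroup ω S, ∀ i : (transGraph ω S).ConnectedComponent,
      ∀ x ∈ Submodule.span K (compSet ω S i), g x ∈ Submodule.span K (compSet ω S i)) ∧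
    -- (1b) the restriction of `g ∈ Tr(S)` to `X_i` lies in `Tr(S_i)|_{X_i}`
    (∀ g ∈ transvectionGroup ω S, ∀ i : (transGraph ω S).ConnectedComponent,
      ∃ g' ∈ transvectionGroup ω (compSet ω S i),
        ∀ x ∈ Submodule.span K (compSet ω S i), g x = g' x) ∧
    -- (1c) the combined restriction map is injective on `Tr(S)`
    (∀ g₁ ∈ transvectionGroup ω S, ∀ g₂ ∈ transvectionGroup ω S,
      (∀ i : (transGraph ω S).ConnectedComponent,
        ∀ x ∈ Submodule.span K (compSet ω S i), g₁ x = g₂ x) → g₁ = g₂) ∧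
    -- (1d) the combined restriction map is surjective onto the product
    (∀ g : (transGraph ω S).ConnectedComponent → Equiv.Perm X,
      (∀ i, g i ∈ transvectionGroup ω (compSet ω S i)) →
      ∃ g₀ ∈ transvectionGroup ω S, ∀ i : (transGraph ω S).ConnectedComponent,
        ∀ x ∈ Submodule.span K (compSet ω S i), g₀ x = g i x) ∧
    -- (2) orbit criterion for the dual action
    (∀ α β : Module.Dual K X,
      (∃ g ∈ transvectionGroup ω S, ∀ x, β x = α (g x)) ↔
        ∀ i : (transGraph ω S).ConnectedComponent,
          ∃ g ∈ transvectionGroup ω (compSet ω S i),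
            ∀ x ∈ Submodule.span K (compSet ω S i), β x = α (g x)) := by
  have hd : ∀ g : (transGraph ω S).ConnectedComponent → Equiv.Perm X,
      (∀ i, g i ∈ transvectionGroup ω (compSet ω S i)) →
      ∃ g₀ ∈ transvectionGroup ω S, ∀ i : (transGraph ω S).ConnectedComponent,
        ∀ x ∈ Submodule.span K (compSet ω S i), g₀ x = g i x := by
    intro g hg
    obtain ⟨T, hT⟩ := tv_finite_cover (ω := ω) hspan
    obtain ⟨g₀, hg₀, hin, hout⟩ := tv_prod halt g hg T
    refine ⟨g₀, hg₀, fun i x hx => ?_⟩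
    by_cases hi : i ∈ T
    · exact hin i hi x hx
    · have h1 : g i = 1 := tv_off_cover_trivial halt hT hi (hg i)
      rw [h1]
      exact hout i hi x hx
  refine ⟨fun g hg i x hx => tv_full_maps halt i hg x hx, ?_, ?_, hd, ?_⟩
  · intro g hg i
    obtain ⟨g', hg', hgg⟩ := tv_restrict halt i hg
    exact ⟨g', hg', fun x hx => (hgg x hx).1⟩
  · intro g₁ hg₁ g₂ hg₂ hagree
    obtain ⟨L₁, hL₁⟩ := tv_linear hg₁
    obtain ⟨L₂, hL₂⟩ := tv_linear hg₂
    have hLeq : (L₁ : X →ₗ[K] X) = (L₂ : X →ₗ[K] X) := by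
      apply LinearMap.ext_on hspan
      intro s hs
      have hmem : s ∈ Submodule.span K
          (compSet ω S ((transGraph ω S).connectedComponentMk ⟨s, hs⟩)) :=
        Submodule.subset_span (tv_mem_compSet hs)
      have h := hagree _ s hmem
      rw [hL₁, hL₂] at h
      exact h
    ext x
    rw [hL₁ x, hL₂ x]
    exact LinearMap.congr_fun hLeq x
  · intro α β
    constructor
    · rintro ⟨g, hg, hβ⟩ i
      obtain ⟨g', hg', hgg⟩ := tv_restrict halt i hg
      exact ⟨g', hg', fun x hx => by rw [hβ x, (hgg x hx).1]⟩
    · intro h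
      choose gc hgc hprop using h
      obtain ⟨g₀, hg₀, hagree⟩ := hd gc hgc
      obtain ⟨L₀, hL₀⟩ := tv_linear hg₀
      refine ⟨g₀, hg₀, ?_⟩
      have hLeq : β = α ∘ₗ (L₀ : X →ₗ[K] X) := by
        apply LinearMap.ext_on hspan
        intro s hs
        have hmem : s ∈ Submodule.span K
            (compSet ω S ((transGraph ω S).connectedComponentMk ⟨s, hs⟩)) :=
          Submodule.subset_span (tv_mem_compSet hs)
        have h1 := hprop _ s hmem
        have h2 := hagree _ s hmem
        exact h1.trans (congrArg α (h2.symm.trans (hL₀ s)))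
      intro x
      rw [LinearMap.congr_fun hLeq x]
      simp [← hL₀ x]
end

section
/- Suppose S is a finite spanning subset of X. Let Y be the free vector space over K on a set B = {b_s}_{s∈S} of symbols indexed by S, equipped with the alternating bilinear form ω_Y defined by ω_Y(b_s, b_t) = ω(s,t), let p : Y → X be the linear map with p(b_s) = s, and let p* : X* → Y* be the dual map p*(α) = α ∘ p. Then im p* is Tr(B)*-invariant, and p* induces a group isomorphism between Tr(S)* and the restriction of Tr(B)* to im p*. In particular, α, β ∈ X* belong to the same orbit of Tr(S)* if and only if p*(α) and p*(β) belong to the same orbit of Tr(B)*. -/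
/-- The projection `p : Y → X` from the free vector space `Y = ⟨b_s : s ∈ S⟩`
to `X`, sending `b_s ↦ s`. -/
noncomputable def projMap (K : Type*) {X : Type*} [Field K] [AddCommGroup X]
    [Module K X] (S : Set X) : (S →₀ K) →ₗ[K] X :=
  Finsupp.linearCombination K Subtype.val

/-- The alternating form `ω_Y` on the free vector space `Y`, defined by
`ω_Y(b_s, b_t) = ω(s, t)` (i.e. pulled back along `p`). -/
noncomputable def freeForm {K X : Type*} [Field K] [AddCommGroup X] [Module K X]
    (ω : X →ₗ[K] X →ₗ[K] K) (S : Set X) :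
    (S →₀ K) →ₗ[K] (S →₀ K) →ₗ[K] K :=
  ω.compl₁₂ (projMap K S) (projMap K S)

/-- The set `B = {b_s}_{s ∈ S}` of standard basis vectors of `Y`. -/
def freeBasisSet (K : Type*) {X : Type*} [Field K] [AddCommGroup X] [Module K X]
    (S : Set X) : Set (S →₀ K) :=
  Set.range fun s : S => Finsupp.single s 1

/-! Since `ω_Y = ω (p ·) (p ·)`, the projection `p` semiconjugates each transvection
`T_{b,k}` of `Y` to the transvection `T_{p b,k}` of `X`, and `p` maps `B` onto `S`.
Pairs `(h, g)` with `p ∘ h = g ∘ p` form a subgroup of `Perm Y × Perm X`, so every element of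
`Tr(B)` is semiconjugate to one of `Tr(S)` and vice versa. As `S` spans, `p` is surjective,
so `p*` is injective and the semiconjugacies transfer to the dual actions. -/

open Function Equiv

theorem Subgroup.exists_prod_mem_of_mem_closure {G H : Type*} [Group G] [Group H]
    {s : Set G} {T : Subgroup H} {P : Subgroup (G × H)} (hs : ∀ a ∈ s, ∃ b ∈ T, (a, b) ∈ P)
    {a : G} (ha : a ∈ closure s) : ∃ b ∈ T, (a, b) ∈ P := by
  have hle : closure s ≤ (P ⊓ (⊤ : Subgroup G).prod T).map (MonoidHom.fst G H) :=
    closure_le _ |>.2 fun a ha ↦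
      let ⟨b, hb, hab⟩ := hs a ha
      ⟨(a, b), ⟨hab, trivial, hb⟩, rfl⟩
  obtain ⟨⟨_, b⟩, ⟨hab, -, hb⟩, rfl⟩ := hle ha
  exact ⟨b, hb, hab⟩

def Equiv.Perm.semiconjSubgroup {α β : Type*} (f : α → β) : Subgroup (Perm α × Perm β) where
  carrier := {q | Semiconj f q.1 q.2}
  one_mem' := Semiconj.id_right
  mul_mem' h h' := h.comp_right h'
  inv_mem' {q} h := h.inverses_right q.1.rightInverse_symm q.2.leftInverse_symm

theorem LinearMap.IsAlt.compl₁₂ {K X Y : Type*} [CommSemiring K] [AddCommMonoid X] [Module K X]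
    [AddCommMonoid Y] [Module K Y] {ω : X →ₗ[K] X →ₗ[K] K} (hω : ω.IsAlt) (p : Y →ₗ[K] X) :
    (ω.compl₁₂ p p).IsAlt :=
  fun y ↦ hω (p y)

section Transvection

variable {K X Y : Type*} [Field K] [AddCommGroup X] [Module K X] [AddCommGroup Y] [Module K Y]

def symplecticTransvection (ω : X →ₗ[K] X →ₗ[K] K) (hω : ω.IsAlt) (s : X) (k : K) :
    X ≃ₗ[K] X :=
  LinearEquiv.ofLinearMap (LinearMap.id + (k • ω.flip s).smulRight s)
    (LinearMap.id + (-k • ω.flip s).smulRight s)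
    (by ext x; simp [hω.self_eq_zero]) (by ext x; simp [hω.self_eq_zero])

variable {ω : X →ₗ[K] X →ₗ[K] K} (hω : ω.IsAlt)
include hω

theorem symplecticTransvection_apply (s : X) (k : K) (x : X) :
    symplecticTransvection ω hω s k x = x + (k * ω x s) • s := by
  simp [symplecticTransvection, mul_smul]

theorem mem_transvectionSet_iff_s4 {S : Set X} {f : Perm X} :
    f ∈ transvectionSet ω S ↔ ∃ s ∈ S, ∃ k ≠ 0, f = (symplecticTransvection ω hω s k).toEquiv := by
  simp only [transvectionSet, Set.mem_ofPred_eq, Equiv.ext_iff, LinearEquiv.coe_toEquiv,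
    symplecticTransvection_apply, ne_eq]

theorem transvectionGroup_le_range_toPermHom (S : Set X) :
    transvectionGroup ω S ≤ (MulAction.toPermHom (X ≃ₗ[K] X) X).range := by
  refine Subgroup.closure_le _ |>.2 fun f hf ↦ ?_
  obtain ⟨s, -, k, -, rfl⟩ := (mem_transvectionSet_iff_s4 hω).1 hf
  exact ⟨symplecticTransvection ω hω s k, by ext; simp⟩

theorem semiconj_symplecticTransvection_compl₁₂ (p : Y →ₗ[K] X) (b : Y) (k : K) :
    Semiconj p (symplecticTransvection (ω.compl₁₂ p p) (hω.compl₁₂ p) b k)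
      (symplecticTransvection ω hω (p b) k) := fun y ↦ by
  rw [symplecticTransvection_apply, symplecticTransvection_apply]
  simp

theorem exists_semiconj_of_mem_transvectionGroup_compl₁₂ (p : Y →ₗ[K] X) {B : Set Y}
    {h : Perm Y} (hh : h ∈ transvectionGroup (ω.compl₁₂ p p) B) :
    ∃ g ∈ transvectionGroup ω (p '' B), Semiconj p h g := by
  refine Subgroup.exists_prod_mem_of_mem_closure (P := Perm.semiconjSubgroup p)
    (fun f hf ↦ ?_) hh
  obtain ⟨b, hb, k, hk, rfl⟩ := (mem_transvectionSet_iff_s4 (hω.compl₁₂ p)).1 hf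
  exact ⟨_, Subgroup.subset_closure <|
      (mem_transvectionSet_iff_s4 hω).2 ⟨p b, Set.mem_image_of_mem p hb, k, hk, rfl⟩,
    semiconj_symplecticTransvection_compl₁₂ hω p b k⟩

theorem exists_semiconj_of_mem_transvectionGroup_image (p : Y →ₗ[K] X) {B : Set Y}
    {g : Perm X} (hg : g ∈ transvectionGroup ω (p '' B)) :
    ∃ h ∈ transvectionGroup (ω.compl₁₂ p p) B, Semiconj p h g := by
  refine Subgroup.exists_prod_mem_of_mem_closure
    (P := (Perm.semiconjSubgroup p).comap
      (MulEquiv.prodComm (M := Perm X) (N := Perm Y)).toMonoidHom)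
    (fun f hf ↦ ?_) hg
  obtain ⟨_, ⟨b, hb, rfl⟩, k, hk, rfl⟩ := (mem_transvectionSet_iff_s4 hω).1 hf
  exact ⟨_, Subgroup.subset_closure <|
      (mem_transvectionSet_iff_s4 (hω.compl₁₂ p)).2 ⟨b, hb, k, hk, rfl⟩,
    semiconj_symplecticTransvection_compl₁₂ hω p b k⟩

end Transvection

section FreeSpace

variable {K X : Type*} [Field K] [AddCommGroup X] [Module K X] {S : Set X}

theorem projMap_single (s : S) : projMap K S (Finsupp.single s 1) = s := by
  simp [projMap]

theorem image_projMap_freeBasisSet : projMap K S '' freeBasisSet K S = S := by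
  rw [freeBasisSet, ← Set.range_comp]
  simp [Function.comp_def, projMap_single]

theorem projMap_surjective (hspan : Submodule.span K S = ⊤) : Surjective (projMap K S) := by
  rw [← LinearMap.range_eq_top, projMap, Finsupp.range_linearCombination, Subtype.range_coe,
    hspan]

variable {ω : X →ₗ[K] X →ₗ[K] K} (hω : ω.IsAlt)
include hω

theorem exists_semiconj_projMap_of_mem_transvectionGroup_freeForm {h : Perm (S →₀ K)}
    (hh : h ∈ transvectionGroup (freeForm ω S) (freeBasisSet K S)) :
    ∃ g ∈ transvectionGroup ω S, Semiconj (projMap K S) h g := by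
  simpa only [image_projMap_freeBasisSet] using
    exists_semiconj_of_mem_transvectionGroup_compl₁₂ hω (projMap K S) hh

theorem exists_semiconj_projMap_of_mem_transvectionGroup {g : Perm X}
    (hg : g ∈ transvectionGroup ω S) :
    ∃ h ∈ transvectionGroup (freeForm ω S) (freeBasisSet K S), Semiconj (projMap K S) h g :=
  exists_semiconj_of_mem_transvectionGroup_image hω (projMap K S)
    (by rwa [image_projMap_freeBasisSet])

end FreeSpace

theorem stmt4_general {K X : Type*} [Field K] [AddCommGroup X] [Module K X]
    (ω : X →ₗ[K] X →ₗ[K] K) (halt : ∀ x, ω x x = 0)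
    (S : Set X) (hspan : Submodule.span K S = ⊤) :
    -- `im p*` is `Tr(B)*`-invariant
    (∀ g ∈ transvectionGroup (freeForm ω S) (freeBasisSet K S),
      ∀ α : Module.Dual K X, ∃ α' : Module.Dual K X,
        ∀ y : S →₀ K, (projMap K S).dualMap α (g y) = (projMap K S).dualMap α' y) ∧
    -- `p*` is injective
    Function.Injective ((projMap K S).dualMap (R := K)) ∧
    -- `p*` intertwines the dual actions in both directions
    (∀ g ∈ transvectionGroup ω S,
      ∃ h ∈ transvectionGroup (freeForm ω S) (freeBasisSet K S),
        ∀ α : Module.Dual K X, ∀ y : S →₀ K,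
          α (g (projMap K S y)) = α (projMap K S (h y))) ∧
    (∀ h ∈ transvectionGroup (freeForm ω S) (freeBasisSet K S),
      ∃ g ∈ transvectionGroup ω S,
        ∀ α : Module.Dual K X, ∀ y : S →₀ K,
          α (g (projMap K S y)) = α (projMap K S (h y))) ∧
    -- in particular: the orbit criterion
    (∀ α β : Module.Dual K X,
      (∃ g ∈ transvectionGroup ω S, ∀ x, β x = α (g x)) ↔
        (∃ h ∈ transvectionGroup (freeForm ω S) (freeBasisSet K S),
          ∀ y : S →₀ K,
            (projMap K S).dualMap β y = (projMap K S).dualMap α (h y))) := by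
  have hp := projMap_surjective hspan
  refine ⟨fun h hh α ↦ ?_, LinearMap.dualMap_injective_of_surjective hp, fun g hg ↦ ?_,
    fun h hh ↦ ?_, fun α β ↦ ⟨?_, ?_⟩⟩
  · obtain ⟨g, hg, hpg⟩ := exists_semiconj_projMap_of_mem_transvectionGroup_freeForm halt hh
    obtain ⟨L, rfl⟩ := transvectionGroup_le_range_toPermHom halt S hg
    exact ⟨α ∘ₗ L.toLinearMap, fun y ↦ congrArg α (hpg y)⟩
  · obtain ⟨h, hh, hpg⟩ := exists_semiconj_projMap_of_mem_transvectionGroup halt hg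
    exact ⟨h, hh, fun α y ↦ congrArg α (hpg y).symm⟩
  · obtain ⟨g, hg, hpg⟩ := exists_semiconj_projMap_of_mem_transvectionGroup_freeForm halt hh
    exact ⟨g, hg, fun α y ↦ congrArg α (hpg y).symm⟩
  · rintro ⟨g, hg, hβ⟩
    obtain ⟨h, hh, hpg⟩ := exists_semiconj_projMap_of_mem_transvectionGroup halt hg
    exact ⟨h, hh, fun y ↦ (hβ _).trans (congrArg α (hpg y).symm)⟩
  · rintro ⟨h, hh, hβα⟩
    obtain ⟨g, hg, hpg⟩ := exists_semiconj_projMap_of_mem_transvectionGroup_freeForm halt hh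
    exact ⟨g, hg, hp.forall.2 fun y ↦ (hβα y).trans (congrArg α (hpg y))⟩

/-- for a finite spanning set `S ⊆ X`, with `Y` the free vector
space on `B = {b_s}`, `ω_Y(b_s,b_t) = ω(s,t)`, `p : Y → X` with `p(b_s) = s`
and dual map `p* : X* → Y*`: the image of `p*` is `Tr(B)*`-invariant, `p*` is
injective and intertwines `Tr(S)*` with the restriction of `Tr(B)*` to
`im p*` (inducing a group isomorphism); in particular `α, β ∈ X*` are in the
same `Tr(S)*`-orbit iff `p*(α)`, `p*(β)` are in the same `Tr(B)*`-orbit. -/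
theorem stmt4 {K X : Type*} [Field K] [AddCommGroup X] [Module K X]
    [FiniteDimensional K X]
    (ω : X →ₗ[K] X →ₗ[K] K) (halt : ∀ x, ω x x = 0)
    (S : Set X) (hfin : S.Finite) (hspan : Submodule.span K S = ⊤) :
    -- `im p*` is `Tr(B)*`-invariant
    (∀ g ∈ transvectionGroup (freeForm ω S) (freeBasisSet K S),
      ∀ α : Module.Dual K X, ∃ α' : Module.Dual K X,
        ∀ y : S →₀ K, (projMap K S).dualMap α (g y) = (projMap K S).dualMap α' y) ∧
    -- `p*` is injective
    Function.Injective ((projMap K S).dualMap (R := K)) ∧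
    -- `p*` intertwines the dual actions in both directions
    (∀ g ∈ transvectionGroup ω S,
      ∃ h ∈ transvectionGroup (freeForm ω S) (freeBasisSet K S),
        ∀ α : Module.Dual K X, ∀ y : S →₀ K,
          α (g (projMap K S y)) = α (projMap K S (h y))) ∧
    (∀ h ∈ transvectionGroup (freeForm ω S) (freeBasisSet K S),
      ∃ g ∈ transvectionGroup ω S,
        ∀ α : Module.Dual K X, ∀ y : S →₀ K,
          α (g (projMap K S y)) = α (projMap K S (h y))) ∧
    -- in particular: the orbit criterion
    (∀ α β : Module.Dual K X,
      (∃ g ∈ transvectionGroup ω S, ∀ x, β x = α (g x)) ↔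
        (∃ h ∈ transvectionGroup (freeForm ω S) (freeBasisSet K S),
          ∀ y : S →₀ K,
            (projMap K S).dualMap β y = (projMap K S).dualMap α (h y))) :=
  stmt4_general ω halt S hspan
end

section
/- Let G and H be permutation groups on sets X and Y respectively, let A ⊆ G and B ⊆ H be generating subsets each closed under inversion, and let ψ : X → Y be a map such that {ψ ∘ a : a ∈ A} = {b ∘ ψ : b ∈ B}. Then: G acts on the quotient set X/ψ := {ψ⁻¹(y) : y ∈ im ψ} of nonempty fibers of ψ; im ψ is an H-invariant subset of Y; and ψ, viewed as a bijection from X/ψ to im ψ, induces a group isomorphism from the permutation group induced by G on X/ψ to the restriction of H to im ψ. -/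
/-!
The pairs `(g, h)` with `ψ ∘ g = h ∘ ψ` form a subgroup of `Sym(X) × Sym(Y)`, so the subgroup
generated by the pairs `(a, b)` with `a ∈ A`, `b ∈ B`, `ψ ∘ a = b ∘ ψ` consists of such pairs.
By hypothesis this generating set projects onto `A` and onto `B`, hence the generated subgroup
projects onto `G` and onto `H`: every `g ∈ G` has a partner `h ∈ H` with `ψ ∘ g = h ∘ ψ` and
vice versa. Such an `h` maps `im ψ` into itself and, being injective, shows that `g` preserves
the fibers of `ψ`.
-/

open Function

namespace Subgroup

variable {M N : Type*} [Group M] [Group N]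

theorem exists_mk_mem_closure_of_mem_closure_fst {P : Set (M × N)} {g : M}
    (hg : g ∈ closure (Prod.fst '' P)) : ∃ h ∈ closure (Prod.snd '' P), (g, h) ∈ closure P := by
  rw [← MonoidHom.coe_fst, ← MonoidHom.map_closure] at hg
  obtain ⟨p, hp, rfl⟩ := hg
  refine ⟨p.2, ?_, hp⟩
  rw [← MonoidHom.coe_snd, ← MonoidHom.map_closure]
  exact ⟨p, hp, rfl⟩

theorem exists_mk_mem_closure_of_mem_closure_snd {P : Set (M × N)} {h : N}
    (hh : h ∈ closure (Prod.snd '' P)) : ∃ g ∈ closure (Prod.fst '' P), (g, h) ∈ closure P := by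
  rw [← MonoidHom.coe_snd, ← MonoidHom.map_closure] at hh
  obtain ⟨p, hp, rfl⟩ := hh
  refine ⟨p.1, ?_, hp⟩
  rw [← MonoidHom.coe_fst, ← MonoidHom.map_closure]
  exact ⟨p, hp, rfl⟩

end Subgroup

namespace Equiv.Perm

variable {X Y : Type*}

def semiconjSubgroup_s5 (ψ : X → Y) : Subgroup (Perm X × Perm Y) where
  carrier := {p | Semiconj ψ p.1 p.2}
  one_mem' := Semiconj.id_right
  mul_mem' hp hq := hp.comp_right hq
  inv_mem' {p} hp := hp.inverses_right p.1.right_inv p.2.left_inv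

def semiconjPairs (A : Set (Perm X)) (B : Set (Perm Y)) (ψ : X → Y) : Set (Perm X × Perm Y) :=
  {p | p.1 ∈ A ∧ p.2 ∈ B ∧ Semiconj ψ p.1 p.2}

variable {A : Set (Perm X)} {B : Set (Perm Y)} {ψ : X → Y}

theorem fst_image_semiconjPairs_eq
    (hψ : (fun a : Perm X => ψ ∘ ⇑a) '' A = (fun b : Perm Y => ⇑b ∘ ψ) '' B) :
    Prod.fst '' semiconjPairs A B ψ = A := by
  refine Set.Subset.antisymm (fun _ ⟨p, hp, hpg⟩ => hpg ▸ hp.1) fun a ha => ?_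
  obtain ⟨b, hb, hab⟩ : ψ ∘ ⇑a ∈ (fun b : Perm Y => ⇑b ∘ ψ) '' B := hψ ▸ ⟨a, ha, rfl⟩
  exact ⟨(a, b), ⟨ha, hb, fun x => (congrFun hab x).symm⟩, rfl⟩

theorem snd_image_semiconjPairs_eq
    (hψ : (fun a : Perm X => ψ ∘ ⇑a) '' A = (fun b : Perm Y => ⇑b ∘ ψ) '' B) :
    Prod.snd '' semiconjPairs A B ψ = B := by
  refine Set.Subset.antisymm (fun _ ⟨p, hp, hph⟩ => hph ▸ hp.2.1) fun b hb => ?_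
  obtain ⟨a, ha, hab⟩ : ⇑b ∘ ψ ∈ (fun a : Perm X => ψ ∘ ⇑a) '' A := hψ ▸ ⟨b, hb, rfl⟩
  exact ⟨(a, b), ⟨ha, hb, congrFun hab⟩, rfl⟩

theorem closure_semiconjPairs_le : Subgroup.closure (semiconjPairs A B ψ) ≤ semiconjSubgroup_s5 ψ :=
  Subgroup.closure_le _ |>.mpr fun _ hp => hp.2.2

end Equiv.Perm

theorem stmt5_general {X Y : Type*} (G : Subgroup (Equiv.Perm X)) (H : Subgroup (Equiv.Perm Y))
    (A : Set (Equiv.Perm X)) (B : Set (Equiv.Perm Y))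
    (hGA : Subgroup.closure A = G) (hHB : Subgroup.closure B = H)
    (ψ : X → Y)
    (hψ : (fun a : Equiv.Perm X => ψ ∘ ⇑a) '' A = (fun b : Equiv.Perm Y => ⇑b ∘ ψ) '' B) :
    -- `G` acts on the quotient set of fibers of `ψ`
    (∀ g ∈ G, ∀ x x' : X, ψ x = ψ x' ↔ ψ (g x) = ψ (g x')) ∧
    -- `im ψ` is `H`-invariant
    (∀ h ∈ H, ∀ y ∈ Set.range ψ, h y ∈ Set.range ψ) ∧
    -- `ψ` intertwines `G` on `X/ψ` with `H` on `im ψ`, in both directions: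
    (∀ g ∈ G, ∃ h ∈ H, ∀ x, ψ (g x) = h (ψ x)) ∧
    (∀ h ∈ H, ∃ g ∈ G, ∀ x, ψ (g x) = h (ψ x)) := by
  have hfst := Equiv.Perm.fst_image_semiconjPairs_eq hψ
  have hsnd := Equiv.Perm.snd_image_semiconjPairs_eq hψ
  have partner_of_mem_G : ∀ g ∈ G, ∃ h ∈ H, Semiconj ψ g h := by
    intro g hg
    rw [← hGA, ← hfst] at hg
    obtain ⟨h, hh, hgh⟩ := Subgroup.exists_mk_mem_closure_of_mem_closure_fst hg
    rw [hsnd, hHB] at hh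
    exact ⟨h, hh, Equiv.Perm.closure_semiconjPairs_le hgh⟩
  have partner_of_mem_H : ∀ h ∈ H, ∃ g ∈ G, Semiconj ψ g h := by
    intro h hh
    rw [← hHB, ← hsnd] at hh
    obtain ⟨g, hg, hgh⟩ := Subgroup.exists_mk_mem_closure_of_mem_closure_snd hh
    rw [hfst, hGA] at hg
    exact ⟨g, hg, Equiv.Perm.closure_semiconjPairs_le hgh⟩
  refine ⟨fun g hg x x' => ?_, fun h hh _ ⟨x, hx⟩ => ?_, partner_of_mem_G, partner_of_mem_H⟩
  · obtain ⟨h, -, hgh⟩ := partner_of_mem_G g hg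
    rw [hgh, hgh, h.injective.eq_iff]
  · obtain ⟨g, -, hgh⟩ := partner_of_mem_H h hh
    exact ⟨g x, hx ▸ hgh x⟩

/-- let `G ≤ Sym(X)` and `H ≤ Sym(Y)` be permutation groups
generated by sets `A`, `B` closed under inversion, and let `ψ : X → Y` satisfy
`ψ ∘ A = B ∘ ψ` (as sets of maps).  Then `G` acts on the set `X/ψ` of nonempty
fibers of `ψ` (i.e. every `g ∈ G` preserves the fiber relation), `im ψ` is
`H`-invariant, and `ψ` induces a group isomorphism from `G|_{X/ψ}` to
`H|_{im ψ}` (expressed by the two intertwining conditions). -/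
theorem stmt5 {X Y : Type*} (G : Subgroup (Equiv.Perm X)) (H : Subgroup (Equiv.Perm Y))
    (A : Set (Equiv.Perm X)) (B : Set (Equiv.Perm Y))
    (hGA : Subgroup.closure A = G) (hHB : Subgroup.closure B = H)
    (hAinv : ∀ a ∈ A, a⁻¹ ∈ A) (hBinv : ∀ b ∈ B, b⁻¹ ∈ B)
    (ψ : X → Y)
    (hψ : (fun a : Equiv.Perm X => ψ ∘ ⇑a) '' A = (fun b : Equiv.Perm Y => ⇑b ∘ ψ) '' B) :
    -- `G` acts on the quotient set of fibers of `ψ`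
    (∀ g ∈ G, ∀ x x' : X, ψ x = ψ x' ↔ ψ (g x) = ψ (g x')) ∧
    -- `im ψ` is `H`-invariant
    (∀ h ∈ H, ∀ y ∈ Set.range ψ, h y ∈ Set.range ψ) ∧
    -- `ψ` intertwines `G` on `X/ψ` with `H` on `im ψ`, in both directions:
    (∀ g ∈ G, ∃ h ∈ H, ∀ x, ψ (g x) = h (ψ x)) ∧
    (∀ h ∈ H, ∃ g ∈ G, ∀ x, ψ (g x) = h (ψ x)) :=
  stmt5_general G H A B hGA hHB ψ hψ
end

section
/- Let X and Y be finite-dimensional K-vector spaces with skew-symmetric bilinear forms ω_X and ω_Y, and let φ : X → Y be a linear map with ω_Y(φ(x₁), φ(x₂)) = ω_X(x₁, x₂) for all x₁, x₂ ∈ X. Let θ : Y → X* be the linear map θ(y) = ω_Y(y) ∘ φ, and for α ∈ X* let θ_α : Y → X* be θ_α(y) = θ(y) + α. Then, for any subset S ⊆ X with ω_X(s,s) = 0 for all s ∈ S: the affine transvection group Tr^α(S, φ) acts on the set Y/ker θ of cosets of ker θ, the set im θ_α is invariant under the dual transvection group Tr(S)*, and θ_α induces a group isomorphism from the permutation group induced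 by Tr^α(S, φ) on Y/ker θ to the restriction of Tr(S)* to im θ_α. -/
/-- Affine transvections `T^{α(s)}_{φ(s),k} : y ↦ y + k(ω_Y(y,φ(s)) + α(s))·φ(s)`
for `s ∈ S` and `k ≠ 0`, as permutations of `Y`. -/
def affTransvectionSet {K Y X : Type*} [Field K] [AddCommGroup Y] [Module K Y]
    (ωY : Y →ₗ[K] Y →ₗ[K] K) (S : Set X) (α : X → K) (φ : X → Y) :
    Set (Equiv.Perm Y) :=
  {f | ∃ s ∈ S, ∃ k : K, k ≠ 0 ∧ ∀ y, f y = y + (k * (ωY y (φ s) + α s)) • φ s}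

/-- The affine transvection group `Tr^α(S, φ)`. -/
def affTransvectionGroup {K Y X : Type*} [Field K] [AddCommGroup Y] [Module K Y]
    (ωY : Y →ₗ[K] Y →ₗ[K] K) (S : Set X) (α : X → K) (φ : X → Y) :
    Subgroup (Equiv.Perm Y) :=
  Subgroup.closure (affTransvectionSet ωY S α φ)

/-!
The functional `θ_α y = ω_Y(y, φ ·) + α` is invariant under the simultaneous action of the
affine transvection `T^{α(s)}_{φ(s),k}` on `Y` and the transvection `T_{s,k}` on `X`: expanding
both sides, the two correction terms `k ω_X(x, s) (ω_Y(y, φ s) + α s)` cancel by skew-symmetry of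
`ω_X` and isotropy of `s`. The pairs `(g, h)` of permutations leaving `θ_α` invariant form a
subgroup of `Perm Y × Perm X`, so generator-wise partners extend to partners for all of
`Tr^α(S, φ)` and of `Tr(S)`. A partner `h` of `g` gives `θ_α (g y) = θ_α y ∘ h⁻¹`, and since `h` is
a bijection, `g` preserves the fibres of `θ`.
-/

section Transvection

variable {K Y : Type*} [Field K] [AddCommGroup Y] [Module K Y]

/-- `T^a_{v,k}`; the linear transvection `T_{v,k}` is the case `a = 0`. -/
def affTransvection (ω : Y →ₗ[K] Y →ₗ[K] K) (v : Y) (hv : ω v v = 0) (a k : K) :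
    Equiv.Perm Y where
  toFun y := y + (k * (ω y v + a)) • v
  invFun y := y + (-k * (ω y v + a)) • v
  left_inv y := by
    simp only [map_add, map_smul, LinearMap.add_apply, LinearMap.smul_apply, hv,
      smul_eq_mul, mul_zero, add_zero]
    module
  right_inv y := by
    simp only [map_add, map_smul, LinearMap.add_apply, LinearMap.smul_apply, hv,
      smul_eq_mul, mul_zero, add_zero]
    module

@[simp]
theorem affTransvection_apply (ω : Y →ₗ[K] Y →ₗ[K] K) (v : Y) (hv : ω v v = 0) (a k : K)
    (y : Y) : affTransvection ω v hv a k y = y + (k * (ω y v + a)) • v :=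
  rfl

theorem affTransvection_zero_mem_transvectionSet {ω : Y →ₗ[K] Y →ₗ[K] K} {S : Set Y}
    {s : Y} (hs : s ∈ S) (hss : ω s s = 0) {k : K} (hk : k ≠ 0) :
    affTransvection ω s hss 0 k ∈ transvectionSet ω S :=
  ⟨s, hs, k, hk, fun x => by simp⟩

theorem affTransvection_mem_affTransvectionSet {X : Type*} {ω : Y →ₗ[K] Y →ₗ[K] K}
    {S : Set X} {α : X → K} {φ : X → Y} {s : X} (hs : s ∈ S) (hφs : ω (φ s) (φ s) = 0)
    {k : K} (hk : k ≠ 0) :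
    affTransvection ω (φ s) hφs (α s) k ∈ affTransvectionSet ω S α φ :=
  ⟨s, hs, k, hk, fun _ => rfl⟩

theorem exists_eq_affTransvection_of_mem_transvectionSet {ω : Y →ₗ[K] Y →ₗ[K] K}
    {S : Set Y} (hS : ∀ s ∈ S, ω s s = 0) {f : Equiv.Perm Y} (hf : f ∈ transvectionSet ω S) :
    ∃ s, ∃ hs : s ∈ S, ∃ k ≠ 0, f = affTransvection ω s (hS s hs) 0 k := by
  obtain ⟨s, hs, k, hk, hf⟩ := hf
  exact ⟨s, hs, k, hk, Equiv.ext fun x => by simp [hf]⟩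

theorem exists_eq_affTransvection_of_mem_affTransvectionSet {X : Type*}
    {ω : Y →ₗ[K] Y →ₗ[K] K} {S : Set X} {α : X → K} {φ : X → Y}
    (hφS : ∀ s ∈ S, ω (φ s) (φ s) = 0) {f : Equiv.Perm Y}
    (hf : f ∈ affTransvectionSet ω S α φ) :
    ∃ s, ∃ hs : s ∈ S, ∃ k ≠ 0, f = affTransvection ω (φ s) (hφS s hs) (α s) k := by
  obtain ⟨s, hs, k, hk, hf⟩ := hf
  exact ⟨s, hs, k, hk, Equiv.ext hf⟩

end Transvection

def invariantPairs {Y X M : Type*} (F : Y → X → M) :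
    Subgroup (Equiv.Perm Y × Equiv.Perm X) where
  carrier := {p | ∀ y x, F (p.1 y) (p.2 x) = F y x}
  one_mem' _ _ := rfl
  mul_mem' hp hq y x := (hp _ _).trans (hq y x)
  inv_mem' {p} hp y x := by
    simpa only [Prod.fst_inv, Prod.snd_inv, Equiv.Perm.coe_inv, Equiv.apply_symm_apply] using
      (hp (p.1⁻¹ y) (p.2⁻¹ x)).symm

theorem inv_mem_invariantPairs_iff {Y X M : Type*} {F : Y → X → M}
    {g : Equiv.Perm Y} {h : Equiv.Perm X} :
    (g, h⁻¹) ∈ invariantPairs F ↔ ∀ y x, F (g y) x = F y (h x) := by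
  refine forall_congr' fun y => ?_
  rw [← h.forall_congr_right]
  simp only [Equiv.Perm.coe_inv, Equiv.symm_apply_apply]

theorem Subgroup.exists_prod_mem_of_mem_closure_fst {G H : Type*} [Group G] [Group H]
    {P : Subgroup (G × H)} {T : Set G} {L : Subgroup H}
    (hT : ∀ g ∈ T, ∃ h ∈ L, (g, h) ∈ P) {g : G} (hg : g ∈ closure T) :
    ∃ h ∈ L, (g, h) ∈ P := by
  have hle : closure T ≤ (P ⊓ (⊤ : Subgroup G).prod L).map (MonoidHom.fst G H) :=
    closure_le _ |>.2 fun g hg =>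
      let ⟨h, hL, hP⟩ := hT g hg
      ⟨(g, h), ⟨hP, trivial, hL⟩, rfl⟩
  obtain ⟨⟨_, h⟩, ⟨hP, -, hL⟩, rfl⟩ := hle hg
  exact ⟨h, hL, hP⟩

theorem Subgroup.exists_prod_mem_of_mem_closure_snd {G H : Type*} [Group G] [Group H]
    {P : Subgroup (G × H)} {T : Set H} {L : Subgroup G}
    (hT : ∀ h ∈ T, ∃ g ∈ L, (g, h) ∈ P) {h : H} (hh : h ∈ closure T) :
    ∃ g ∈ L, (g, h) ∈ P :=
  exists_prod_mem_of_mem_closure_fst (P := P.comap (MulEquiv.prodComm).toMonoidHom) hT hh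

theorem eq_iff_eq_of_intertwines {Y X M : Type*} {F : Y → X → M}
    {g : Equiv.Perm Y} {h : Equiv.Perm X} (hgh : ∀ y x, F (g y) x = F y (h x))
    (y y' : Y) : F (g y) = F (g y') ↔ F y = F y' := by
  simp only [funext_iff, hgh]
  exact h.forall_congr_right (q := fun x => F y x = F y' x)

section Intertwining

variable {K X Y : Type*} [Field K] [AddCommGroup X] [Module K X] [AddCommGroup Y] [Module K Y]
  {ωX : X →ₗ[K] X →ₗ[K] K} {ωY : Y →ₗ[K] Y →ₗ[K] K} {φ : X →ₗ[K] Y}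

theorem affTransvection_pair_mem_invariantPairs (hskewX : ∀ x₁ x₂, ωX x₁ x₂ = -ωX x₂ x₁)
    (hφ : ∀ x₁ x₂, ωY (φ x₁) (φ x₂) = ωX x₁ x₂) (α : Module.Dual K X) {s : X}
    (hs : ωX s s = 0) (k : K) :
    (affTransvection ωY (φ s) ((hφ s s).trans hs) (α s) k, affTransvection ωX s hs 0 k) ∈
      invariantPairs fun y x => (ωY.compl₂ φ y + α) x := by
  intro y x
  simp only [affTransvection_apply, LinearMap.add_apply, LinearMap.compl₂_apply, map_add,
    map_smul, LinearMap.smul_apply, smul_eq_mul, hφ, hs, add_zero]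
  linear_combination (k * (ωY y (φ s) + α s)) * hskewX s x

theorem exists_transvectionGroup_pair_mem_invariantPairs
    (hskewX : ∀ x₁ x₂, ωX x₁ x₂ = -ωX x₂ x₁)
    (hφ : ∀ x₁ x₂, ωY (φ x₁) (φ x₂) = ωX x₁ x₂) (α : Module.Dual K X) {S : Set X}
    (hS : ∀ s ∈ S, ωX s s = 0) {g : Equiv.Perm Y}
    (hg : g ∈ affTransvectionGroup ωY S α φ) :
    ∃ h ∈ transvectionGroup ωX S, (g, h) ∈ invariantPairs fun y x => (ωY.compl₂ φ y + α) x := by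
  refine Subgroup.exists_prod_mem_of_mem_closure_fst (fun g hg => ?_) hg
  obtain ⟨s, hs, k, hk, rfl⟩ := exists_eq_affTransvection_of_mem_affTransvectionSet
    (fun s hs => (hφ s s).trans (hS s hs)) hg
  exact ⟨_, Subgroup.subset_closure (affTransvection_zero_mem_transvectionSet hs (hS s hs) hk),
    affTransvection_pair_mem_invariantPairs hskewX hφ α (hS s hs) k⟩

theorem exists_affTransvectionGroup_pair_mem_invariantPairs
    (hskewX : ∀ x₁ x₂, ωX x₁ x₂ = -ωX x₂ x₁)
    (hφ : ∀ x₁ x₂, ωY (φ x₁) (φ x₂) = ωX x₁ x₂) (α : Module.Dual K X) {S : Set X}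
    (hS : ∀ s ∈ S, ωX s s = 0) {h : Equiv.Perm X}
    (hh : h ∈ transvectionGroup ωX S) :
    ∃ g ∈ affTransvectionGroup ωY S α φ,
      (g, h) ∈ invariantPairs fun y x => (ωY.compl₂ φ y + α) x := by
  refine Subgroup.exists_prod_mem_of_mem_closure_snd (fun h hh => ?_) hh
  obtain ⟨s, hs, k, hk, rfl⟩ := exists_eq_affTransvection_of_mem_transvectionSet hS hh
  exact ⟨_, Subgroup.subset_closure
    (affTransvection_mem_affTransvectionSet hs ((hφ s s).trans (hS s hs)) hk),
    affTransvection_pair_mem_invariantPairs hskewX hφ α (hS s hs) k⟩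

end Intertwining

theorem stmt6_general {K X Y : Type*} [Field K] [AddCommGroup X] [Module K X]
    [AddCommGroup Y] [Module K Y]
    (ωX : X →ₗ[K] X →ₗ[K] K) (hskewX : ∀ x₁ x₂, ωX x₁ x₂ = -ωX x₂ x₁)
    (ωY : Y →ₗ[K] Y →ₗ[K] K)
    (φ : X →ₗ[K] Y) (hφ : ∀ x₁ x₂, ωY (φ x₁) (φ x₂) = ωX x₁ x₂)
    (α : Module.Dual K X)
    (S : Set X) (hS : ∀ s ∈ S, ωX s s = 0) :
    -- let `θ y = ω_Y(y) ∘ φ` and `θ_α y = θ y + α`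
    ∀ θ : Y →ₗ[K] Module.Dual K X, θ = ωY.compl₂ φ →
    ∀ θα : Y → Module.Dual K X, θα = (fun y => θ y + α) →
    -- `Tr^α(S,φ)` acts on `Y / ker θ`
    ((∀ g ∈ affTransvectionGroup ωY S ⇑α ⇑φ, ∀ y y' : Y,
        θ y = θ y' ↔ θ (g y) = θ (g y')) ∧
    -- `im θ_α` is `Tr(S)*`-invariant
    (∀ h ∈ transvectionGroup ωX S, ∀ y : Y, ∃ y' : Y,
        ∀ x, θα y (h x) = θα y' x) ∧
    -- `θ_α` intertwines the two actions in both directions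
    (∀ g ∈ affTransvectionGroup ωY S ⇑α ⇑φ, ∃ h ∈ transvectionGroup ωX S,
        ∀ y x, θα (g y) x = θα y (h x)) ∧
    (∀ h ∈ transvectionGroup ωX S, ∃ g ∈ affTransvectionGroup ωY S ⇑α ⇑φ,
        ∀ y x, θα (g y) x = θα y (h x))) := by
  rintro θ rfl θα rfl
  have forward : ∀ g ∈ affTransvectionGroup ωY S α φ, ∃ h ∈ transvectionGroup ωX S,
      ∀ y x, (ωY.compl₂ φ (g y) + α) x = (ωY.compl₂ φ y + α) (h x) := by
    intro g hg
    obtain ⟨h, hh, hgh⟩ := exists_transvectionGroup_pair_mem_invariantPairs hskewX hφ α hS hg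
    rw [← inv_inv h] at hgh
    exact ⟨h⁻¹, inv_mem hh, inv_mem_invariantPairs_iff.1 hgh⟩
  have backward : ∀ h ∈ transvectionGroup ωX S, ∃ g ∈ affTransvectionGroup ωY S α φ,
      ∀ y x, (ωY.compl₂ φ (g y) + α) x = (ωY.compl₂ φ y + α) (h x) := by
    intro h hh
    obtain ⟨g, hg, hgh⟩ :=
      exists_affTransvectionGroup_pair_mem_invariantPairs hskewX hφ α hS (inv_mem hh)
    exact ⟨g, hg, inv_mem_invariantPairs_iff.1 hgh⟩
  refine ⟨fun g hg y y' => ?_, fun h hh y => ?_, forward, backward⟩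
  · obtain ⟨h, -, hgh⟩ := forward g hg
    have := eq_iff_eq_of_intertwines (F := fun y x => (ωY.compl₂ φ y + α) x) hgh y y'
    simp only [DFunLike.coe_fn_eq, add_left_inj] at this
    exact this.symm
  · obtain ⟨g, -, hgh⟩ := backward h hh
    exact ⟨g y, fun x => (hgh y x).symm⟩

/-- with `φ : X → Y` linear respecting the skew-symmetric forms,
`θ : Y → X*`, `θ(y) = ω_Y(y) ∘ φ`, and `θ_α(y) = θ(y) + α`: for any `S ⊆ X`
with `ω_X(s,s) = 0` on `S`, the affine transvection group `Tr^α(S,φ)` acts on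
`Y/ker θ` (it preserves the fibers of `θ`), `im θ_α` is `Tr(S)*`-invariant,
and `θ_α` induces a group isomorphism from `Tr^α(S,φ)` on `Y/ker θ` to the
restriction of `Tr(S)*` to `im θ_α` (expressed by the intertwining
conditions in both directions). -/
theorem stmt6 {K X Y : Type*} [Field K] [AddCommGroup X] [Module K X]
    [AddCommGroup Y] [Module K Y]
    [FiniteDimensional K X] [FiniteDimensional K Y]
    (ωX : X →ₗ[K] X →ₗ[K] K) (hskewX : ∀ x₁ x₂, ωX x₁ x₂ = -ωX x₂ x₁)
    (ωY : Y →ₗ[K] Y →ₗ[K] K) (hskewY : ∀ y₁ y₂, ωY y₁ y₂ = -ωY y₂ y₁)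
    (φ : X →ₗ[K] Y) (hφ : ∀ x₁ x₂, ωY (φ x₁) (φ x₂) = ωX x₁ x₂)
    (α : Module.Dual K X)
    (S : Set X) (hS : ∀ s ∈ S, ωX s s = 0) :
    -- let `θ y = ω_Y(y) ∘ φ` and `θ_α y = θ y + α`
    ∀ θ : Y →ₗ[K] Module.Dual K X, θ = ωY.compl₂ φ →
    ∀ θα : Y → Module.Dual K X, θα = (fun y => θ y + α) →
    -- `Tr^α(S,φ)` acts on `Y / ker θ`
    ((∀ g ∈ affTransvectionGroup ωY S ⇑α ⇑φ, ∀ y y' : Y,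
        θ y = θ y' ↔ θ (g y) = θ (g y')) ∧
    -- `im θ_α` is `Tr(S)*`-invariant
    (∀ h ∈ transvectionGroup ωX S, ∀ y : Y, ∃ y' : Y,
        ∀ x, θα y (h x) = θα y' x) ∧
    -- `θ_α` intertwines the two actions in both directions
    (∀ g ∈ affTransvectionGroup ωY S ⇑α ⇑φ, ∃ h ∈ transvectionGroup ωX S,
        ∀ y x, θα (g y) x = θα y (h x)) ∧
    (∀ h ∈ transvectionGroup ωX S, ∃ g ∈ affTransvectionGroup ωY S ⇑α ⇑φ,
        ∀ y x, θα (g y) x = θα y (h x))) :=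
  stmt6_general ωX hskewX ωY φ hφ α S hS
end

section
/- Suppose K = F₂, S is a basis of X, and α ∈ X*. If there exists x₀ ∈ ker ω with Q_S(x₀) ≠ α(x₀), then for every coset p of ker ω in X the function Q_S + α takes both values 0 and 1 on p; otherwise, Q_S + α is constant on each coset of ker ω. -/
/-- over `K = 𝔽₂`, with `S` a basis of `X` and `α ∈ X*`:
if some `x₀ ∈ ker ω` has `Q_S(x₀) ≠ α(x₀)`, then `Q_S + α` takes both values
`0` and `1` on every coset of `ker ω`; otherwise `Q_S + α` is constant on
each coset of `ker ω`. -/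
theorem stmt17 {X : Type*} [AddCommGroup X] [Module (ZMod 2) X]
    [FiniteDimensional (ZMod 2) X]
    (ω : X →ₗ[ZMod 2] X →ₗ[ZMod 2] ZMod 2) (halt : ∀ x, ω x x = 0)
    (S : Set X) (hind : LinearIndependent (ZMod 2) ((↑) : S → X))
    (hspan : Submodule.span (ZMod 2) S = ⊤)
    (Q : X → ZMod 2) (hQS : ∀ s ∈ S, Q s = 1)
    (hQpol : ∀ x y, Q (x + y) + Q x + Q y = ω x y)
    (α : Module.Dual (ZMod 2) X) :
    ((∃ x₀ ∈ LinearMap.ker ω, Q x₀ ≠ α x₀) →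
      ∀ x : X, (∃ x₀ ∈ LinearMap.ker ω, Q (x + x₀) + α (x + x₀) = 0) ∧
        (∃ x₀ ∈ LinearMap.ker ω, Q (x + x₀) + α (x + x₀) = 1)) ∧
    ((∀ x₀ ∈ LinearMap.ker ω, Q x₀ = α x₀) →
      ∀ x : X, ∀ x₀ ∈ LinearMap.ker ω, Q (x + x₀) + α (x + x₀) = Q x + α x) := by

  have hQ0 : Q 0 = 0 := by
    have h := hQpol 0 0
    simp [halt] at h
    -- Q 0 + Q 0 + Q 0 = 0, i.e. Q 0 = 0 in ZMod 2
    have h2 : Q 0 + Q 0 = 0 := by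
      have : (2 : ZMod 2) = 0 := by decide
      calc Q 0 + Q 0 = 2 * Q 0 := by ring
        _ = 0 := by rw [this]; ring
    rwa [add_assoc, h2, add_zero] at h
  have key : ∀ x x₀, x₀ ∈ LinearMap.ker ω →
      Q (x + x₀) + α (x + x₀) = (Q x + α x) + (Q x₀ + α x₀) := by
    intro x x₀ hx₀
    have hker : ω x₀ = 0 := LinearMap.mem_ker.mp hx₀
    have hsym : ω x x₀ = 0 := by
      have h := halt (x + x₀)
      simp [map_add, LinearMap.add_apply, halt, hker] at h
      simpa using h
    have h := hQpol x x₀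
    rw [hsym] at h
    have hQadd : Q (x + x₀) = Q x + Q x₀ := by
      have h2 : ∀ a : ZMod 2, a + a = 0 := by decide
      calc Q (x + x₀) = Q (x + x₀) + (Q x + Q x₀) + (Q x + Q x₀) := by
            rw [add_assoc, h2, add_zero]
        _ = (Q (x + x₀) + Q x + Q x₀) + (Q x + Q x₀) := by ring
        _ = Q x + Q x₀ := by rw [h, zero_add]
    rw [hQadd, map_add]
    ring
  constructor
  · rintro ⟨x₀, hx₀, hne⟩ x
    have hval : Q x₀ + α x₀ = 1 := by
      revert hne; generalize Q x₀ = a; generalize α x₀ = b; revert a b; decide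
    have hz : Q (x + 0) + α (x + 0) = Q x + α x := by
      have := key x 0 (Submodule.zero_mem _)
      simpa [hQ0] using this
    have hf : Q (x + x₀) + α (x + x₀) = (Q x + α x) + 1 := by
      rw [key x x₀ hx₀, hval]
    rcases (by decide : ∀ a : ZMod 2, a = 0 ∨ a = 1) (Q x + α x) with hc | hc
    · exact ⟨⟨0, Submodule.zero_mem _, by rw [hz, hc]⟩,
        ⟨x₀, hx₀, by rw [hf, hc, zero_add]⟩⟩
    · exact ⟨⟨x₀, hx₀, by rw [hf, hc]; decide⟩,
        ⟨0, Submodule.zero_mem _, by rw [hz, hc]⟩⟩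
  · intro hall x x₀ hx₀
    have := key x x₀ hx₀
    have h2 : Q x₀ + α x₀ = 0 := by
      rw [hall x₀ hx₀]
      have := (by decide : ∀ a : ZMod 2, a + a = 0) (α x₀)
      exact this
    rw [this, h2, add_zero]
end

section
/- In the line-graph setting over F₂, let E_span ⊆ E be the edge set of a spanning tree of the connected multigraph G = (V,E). Then X* is the internal direct sum of im δ and the annihilator E_span⁰ = {β ∈ X* : β(e) = 0 for all e ∈ E_span}. -/
/-- The standard inner product on `⟨V⟩ = V → 𝔽₂` making `V` orthonormal. -/
def piInner (V : Type*) [Fintype V] :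
    (V → ZMod 2) →ₗ[ZMod 2] (V → ZMod 2) →ₗ[ZMod 2] ZMod 2 :=
  LinearMap.mk₂ (ZMod 2) (fun y z => ∑ v, y v * z v)
    (fun y y' z => by simp [add_mul, Finset.sum_add_distrib])
    (fun c y z => by simp [Finset.mul_sum, mul_assoc])
    (fun y z z' => by simp [mul_add, Finset.sum_add_distrib])
    (fun c y z => by simp [Finset.mul_sum, mul_assoc, mul_comm, mul_left_comm])

private lemma walk_const {V : Type*} {G : SimpleGraph V} (hG : G.Connected)
    {y : V → ZMod 2} (h : ∀ u w, G.Adj u w → y u = y w) (u w : V) : y u = y w := by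
  obtain ⟨p⟩ := hG u w
  induction p with
  | nil => rfl
  | cons h' _ ih => exact (h _ _ h').trans ih

private lemma zmod2_add_eq_zero {a b : ZMod 2} (h : a + b = 0) : a = b := by
  revert h; revert a b; decide

/-- let `G = (V, E)` be a connected multigraph (each edge `e`
has two distinct endpoints `v₁ e ≠ v₂ e`), `X = ⟨E⟩` the free `𝔽₂`-vector
space on `E`, `∂ : X → ⟨V⟩` the boundary map sending each edge to the sum of
its endpoints, and `δ : ⟨V⟩ → X*` the co-boundary map `δ(y)(x) = ⟨y, ∂x⟩`.
If `E_span ⊆ E` is the edge set of a spanning tree of `G`, then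
`X* = im δ ⊕ E_span⁰`, where `E_span⁰` is the annihilator of `E_span`. -/
theorem stmt18 {V E : Type*} [Fintype V] [DecidableEq V] [Fintype E] [DecidableEq E]
    (v₁ v₂ : E → V) (hend : ∀ e, v₁ e ≠ v₂ e)
    -- the multigraph is connected
    (hconn : (SimpleGraph.fromRel fun u w =>
        ∃ e : E, (v₁ e = u ∧ v₂ e = w) ∨ (v₁ e = w ∧ v₂ e = u)).Connected)
    -- the boundary map `∂`
    (bd : (E → ZMod 2) →ₗ[ZMod 2] (V → ZMod 2))
    (hbd : ∀ e : E, bd (Pi.single e 1) = Pi.single (v₁ e) 1 + Pi.single (v₂ e) 1)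
    -- `E_span` is the edge set of a spanning tree: no two of its edges are
    -- parallel, and the corresponding simple graph is a tree on all of `V`
    (Espan : Set E)
    (hpar : ∀ e ∈ Espan, ∀ f ∈ Espan,
      ((v₁ e = v₁ f ∧ v₂ e = v₂ f) ∨ (v₁ e = v₂ f ∧ v₂ e = v₁ f)) → e = f)
    (htree : (SimpleGraph.fromRel fun u w =>
        ∃ e ∈ Espan, (v₁ e = u ∧ v₂ e = w) ∨ (v₁ e = w ∧ v₂ e = u)).IsTree) :
    -- `X* = im δ ⊕ E_span⁰`
    IsCompl (LinearMap.range ((piInner V).compl₂ bd))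
      (Submodule.dualAnnihilator
        (Submodule.span (ZMod 2) ((fun e => Pi.single e (1 : ZMod 2)) '' Espan))) := by
  classical
  set T := SimpleGraph.fromRel fun u w =>
      ∃ e ∈ Espan, (v₁ e = u ∧ v₂ e = w) ∨ (v₁ e = w ∧ v₂ e = u) with hT
  obtain ⟨v₀⟩ : Nonempty V := htree.isConnected.nonempty
  set δ := (piInner V).compl₂ bd with hδ
  -- evaluation of δ on basis vectors
  have hev : ∀ (y : V → ZMod 2) (e : E),
      δ y (Pi.single e 1) = y (v₁ e) + y (v₂ e) := by
    intro y e
    have h1 : δ y (Pi.single e 1) = ∑ v, y v * (bd (Pi.single e 1)) v := by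
      simp [hδ, piInner]
    rw [h1, hbd e]
    simp [Pi.add_apply, Pi.single_apply, mul_add, Finset.sum_add_distrib, mul_ite,
      Finset.sum_ite_eq']
  -- a function whose coboundary vanishes on the tree edges is constant
  have hconst : ∀ y : V → ZMod 2, (∀ e ∈ Espan, y (v₁ e) = y (v₂ e)) →
      ∀ u w, y u = y w := by
    intro y hy
    refine walk_const htree.isConnected ?_
    intro u w huw
    rw [hT, SimpleGraph.fromRel_adj] at huw
    obtain ⟨-, h | h⟩ := huw <;>
      obtain ⟨e, he, ⟨h1, h2⟩ | ⟨h1, h2⟩⟩ := h <;>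
      subst h1 <;> subst h2
    · exact hy e he
    · exact (hy e he).symm
    · exact (hy e he).symm
    · exact hy e he
  -- decompose any vector of X into basis vectors
  have hbasis : ∀ x : E → ZMod 2, x = ∑ e, x e • (Pi.single e 1 : E → ZMod 2) := by
    intro x
    funext j
    simp [Pi.single_apply, Finset.sum_apply, mul_ite, Finset.sum_ite_eq']
  constructor
  · -- disjointness
    rw [Submodule.disjoint_def]
    rintro β ⟨y, rfl⟩ hβ
    rw [Submodule.mem_dualAnnihilator] at hβ
    have hy : ∀ e ∈ Espan, y (v₁ e) = y (v₂ e) := by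
      intro e he
      refine zmod2_add_eq_zero ?_
      rw [← hev y e]
      exact hβ _ (Submodule.subset_span ⟨e, he, rfl⟩)
    have hc := hconst y hy
    refine LinearMap.ext fun x => ?_
    rw [show (0 : Module.Dual (ZMod 2) (E → ZMod 2)) x = 0 from rfl]
    conv_lhs => rw [hbasis x]
    rw [map_sum]
    simp only [map_smul, hev]
    have : ∀ e : E, y (v₁ e) + y (v₂ e) = 0 := fun e => by
      rw [hc (v₁ e) (v₂ e)]; exact CharTwo.add_self_eq_zero _
    simp [this]
  · -- codisjointness
    haveI : Fintype ↥Espan := Fintype.ofFinite _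
    haveI : Fintype T.edgeSet := Fintype.ofFinite _
    -- the restriction of the coboundary to the tree edges
    set φ : (V → ZMod 2) →ₗ[ZMod 2] (↥Espan → ZMod 2) :=
      { toFun := fun y e => y (v₁ e.1) + y (v₂ e.1)
        map_add' := fun y z => by funext e; simp [Pi.add_apply]; ring
        map_smul' := fun c y => by funext e; simp [Pi.smul_apply]; ring } with hφ
    -- its kernel is the constants
    have hker : LinearMap.ker φ
        = Submodule.span (ZMod 2) {(fun _ => (1 : ZMod 2) : V → ZMod 2)} := by
      ext y
      rw [LinearMap.mem_ker, Submodule.mem_span_singleton]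
      constructor
      · intro h
        have hy : ∀ e ∈ Espan, y (v₁ e) = y (v₂ e) := fun e he =>
          zmod2_add_eq_zero (congrFun h ⟨e, he⟩)
        exact ⟨y v₀, by funext u; simp [hconst y hy u v₀]⟩
      · rintro ⟨c, rfl⟩
        funext e
        simp [hφ, CharTwo.add_self_eq_zero]
    -- counting: Espan has card V - 1 elements
    have hcard : Fintype.card ↥Espan + 1 = Fintype.card V := by
      have hbij : Function.Bijective
          (fun e : ↥Espan => (⟨s(v₁ e.1, v₂ e.1), by
            rw [SimpleGraph.mem_edgeSet, hT, SimpleGraph.fromRel_adj]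
            exact ⟨hend e.1, Or.inl ⟨e.1, e.2, Or.inl ⟨rfl, rfl⟩⟩⟩⟩ :
            T.edgeSet)) := by
        constructor
        · rintro ⟨e, he⟩ ⟨f, hf⟩ h
          have h' : s(v₁ e, v₂ e) = s(v₁ f, v₂ f) := Subtype.ext_iff.mp h
          exact Subtype.ext (hpar e he f hf (Sym2.eq_iff.mp h'))
        · rintro ⟨z, hz⟩
          induction z using Sym2.ind with
          | _ u w =>
            have hadj := hz
            rw [SimpleGraph.mem_edgeSet, hT, SimpleGraph.fromRel_adj] at hadj
            obtain ⟨-, h | h⟩ := hadj <;> obtain ⟨e, he, ⟨h1, h2⟩ | ⟨h1, h2⟩⟩ := h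
            · exact ⟨⟨e, he⟩, Subtype.ext (show s(v₁ e, v₂ e) = s(u, w) by
                rw [h1, h2])⟩
            · exact ⟨⟨e, he⟩, Subtype.ext (show s(v₁ e, v₂ e) = s(u, w) by
                rw [h1, h2]; exact Sym2.eq_swap)⟩
            · exact ⟨⟨e, he⟩, Subtype.ext (show s(v₁ e, v₂ e) = s(u, w) by
                rw [h1, h2]; exact Sym2.eq_swap)⟩
            · exact ⟨⟨e, he⟩, Subtype.ext (show s(v₁ e, v₂ e) = s(u, w) by
                rw [h1, h2])⟩
      have h1 := htree.card_edgeFinset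
      rw [SimpleGraph.edgeFinset, Set.toFinset_card] at h1
      rwa [← Fintype.card_of_bijective hbij] at h1
    -- hence φ is surjective
    have hone : (fun _ => (1 : ZMod 2) : V → ZMod 2) ≠ 0 := by
      intro h
      exact one_ne_zero (congrFun h v₀)
    have hsurj : Function.Surjective φ := by
      rw [← LinearMap.range_eq_top]
      apply Submodule.eq_top_of_finrank_eq
      have h2 := φ.finrank_range_add_finrank_ker
      rw [hker, finrank_span_singleton hone] at h2
      rw [Module.finrank_pi] at h2 ⊢
      omega
    -- now decompose any functional
    rw [codisjoint_iff, eq_top_iff]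
    intro β _
    obtain ⟨y, hy⟩ := hsurj (fun e => β (Pi.single e.1 1))
    refine Submodule.mem_sup.mpr ⟨δ y, ⟨y, rfl⟩, β - δ y, ?_, by abel⟩
    rw [Submodule.mem_dualAnnihilator]
    intro x hx
    have hle : Submodule.span (ZMod 2)
        ((fun e => Pi.single e (1 : ZMod 2)) '' Espan) ≤ LinearMap.ker (β - δ y) := by
      rw [Submodule.span_le]
      rintro _ ⟨e, he, rfl⟩
      rw [SetLike.mem_coe, LinearMap.mem_ker, LinearMap.sub_apply, hev]
      have := congrFun hy ⟨e, he⟩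
      simp only [hφ, LinearMap.coe_mk, AddHom.coe_mk] at this
      rw [this, sub_self]
    exact hle hx
end
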